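/- arXiv:2402.09429 — 4 statements merged into one kernel-verified Lean document; each statement's English description precedes it below -/
import Mathlib

section
/- Two DAGs on the same vertex set are Markov equivalent (represent the same set of conditional independence statements under d-separation) if and only if they have the same skeleton and the same set of immoralities (v-structures). -/
/-- Skeleton (undirected) adjacency of a directed graph. -/
def Skel {V : Type*} (E : V → V → Prop) (a b : V) : Prop := E a b ∨ E b a

/-- Directed reachability: `Reaches E a b` iff there is a directed path from `a` to `b`. -/
def Reaches {V : Type*} (E : V → V → Prop) : V → V → Prop := Relation.ReflTransGen E

/-- A directed graph is acyclic if no edge can be completed to a directed cycle. -/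
def IsAcyclicD {V : Type*} (E : V → V → Prop) : Prop := ∀ a b : V, E a b → ¬ Reaches E b a

/-- `(a, b, c)` is an immorality (v-structure): `a → b ← c` with `a, c` non-adjacent. -/
def Immorality {V : Type*} (E : V → V → Prop) (a b c : V) : Prop :=
  a ≠ c ∧ E a b ∧ E c b ∧ ¬ Skel E a c

/-- `p` is an (undirected) trail from `a` to `b` in the skeleton of `E`. -/
def IsTrail {V : Type*} (E : V → V → Prop) (a b : V) (p : List V) : Prop :=
  p.Chain' (Skel E) ∧ p.head? = some a ∧ p.getLast? = some b ∧ p.Nodup ∧ 2 ≤ p.length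

/-- A consecutive triple `x - y - z` on a trail is blocked by `S`:
a collider `x → y ← z` blocks unless `y` has a descendant (possibly itself) in `S`;
a non-collider blocks iff `y ∈ S`. -/
def BlockedTriple {V : Type*} (E : V → V → Prop) (S : Set V) (x y z : V) : Prop :=
  ((E x y ∧ E z y) ∧ ∀ d ∈ S, ¬ Reaches E y d) ∨ (¬ (E x y ∧ E z y) ∧ y ∈ S)

/-- A trail is blocked by `S` if some consecutive triple on it is blocked. -/
def BlockedTrail {V : Type*} (E : V → V → Prop) (S : Set V) (p : List V) : Prop :=
  ∃ l x y z r, p = l ++ x :: y :: z :: r ∧ BlockedTriple E S x y z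

/-- d-separation: every trail between `A` and `B` is blocked by `S`. -/
def DSep {V : Type*} (E : V → V → Prop) (A B S : Set V) : Prop :=
  ∀ a ∈ A, ∀ b ∈ B, ∀ p : List V, IsTrail E a b p → BlockedTrail E S p

/-- Markov equivalence: the same d-separations among disjoint sets. -/
def MarkovEquiv {V : Type*} (E₁ E₂ : V → V → Prop) : Prop :=
  ∀ A B S : Set V, Disjoint A B → Disjoint A S → Disjoint B S →
    (DSep E₁ A B S ↔ DSep E₂ A B S)

/-- The ancestral closure of `W`: all vertices with a directed path into `W`. -/
def AncSet {V : Type*} (E : V → V → Prop) (W : Set V) : Set V :=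
  {v | ∃ w ∈ W, Reaches E v w}

/-- The subgraph induced on a vertex set. -/
def InducedE {V : Type*} (E : V → V → Prop) (W : Set V) (a b : V) : Prop :=
  E a b ∧ a ∈ W ∧ b ∈ W

/-- Moral graph adjacency: skeleton edges plus marriages of common parents. -/
def Moral {V : Type*} (E : V → V → Prop) (a b : V) : Prop :=
  a ≠ b ∧ (E a b ∨ E b a ∨ ∃ c, E a c ∧ E b c)

/-- `p` is a path from `a` to `b` in the undirected graph `G`. -/
def UPath {V : Type*} (G : V → V → Prop) (a b : V) (p : List V) : Prop :=
  p.Chain' G ∧ p.head? = some a ∧ p.getLast? = some b ∧ p.Nodup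

/-- Separation in an undirected graph: every path from `A` to `B` meets `S`. -/
def USep {V : Type*} (G : V → V → Prop) (A B S : Set V) : Prop :=
  ∀ a ∈ A, ∀ b ∈ B, ∀ p : List V, UPath G a b p → ∃ s ∈ S, s ∈ p

/-!
If two DAGs are Markov equivalent they have the same skeleton, because two non-adjacent vertices
`a`, `b` are d-separated by their proper ancestors `An {a, b} \ {a, b}` while the trail `a - b`
is never blocked; and they have the same immoralities, because for an immorality `a → b ← c` that
separating set misses `b`, so the trail `a - b - c` is blocked in the other graph only if `b` is a
collider there too.

For the converse it is convenient to work with active walks, which may repeat vertices: cutting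
out a closed sub-walk keeps a walk active, so active walks and active trails connect the same
pairs of vertices. An active walk of `E₁` is turned into one of `E₂` by descending on its length
and then on the total distance of its vertices to the conditioning set `S`: a shielded collider,
or a shielded non-collider that is a collider in `E₂`, is bypassed; a collider whose descendants
in `S` are lost in `E₂` is replaced by its child on a shortest path to `S`, which the shared
immoralities force to be a collider again. When none of this applies, the shared skeleton and
immoralities make the walk active in `E₂`.
-/

open Set

section

variable {V : Type*} {E : V → V → Prop} {S : Set V} {a b c x y z u : V}

theorem Skel.symm (h : Skel E a b) : Skel E b a := Or.symm h

namespace IsAcyclicD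

theorem irrefl (h : IsAcyclicD E) (a : V) : ¬ E a a :=
  fun he => h a a he .refl

theorem asymm (h : IsAcyclicD E) (hab : E a b) : ¬ E b a :=
  fun hba => h a b hab (.single hba)

theorem not_cycle₃ (h : IsAcyclicD E) (hab : E a b) (hbc : E b c) : ¬ E c a :=
  fun hca => h a b hab (.head hbc (.single hca))

theorem ne_of_skel (h : IsAcyclicD E) (hs : Skel E a b) : a ≠ b := by
  rintro rfl; exact hs.elim (h.irrefl a) (h.irrefl a)

end IsAcyclicD

theorem blockedTriple_comm : BlockedTriple E S x y z ↔ BlockedTriple E S z y x := by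
  simp only [BlockedTriple, and_comm (a := E x y)]

theorem not_blockedTriple_iff :
    ¬ BlockedTriple E S x y z ↔
      ((E x y ∧ E z y) → ∃ s ∈ S, Reaches E y s) ∧ (¬ (E x y ∧ E z y) → y ∉ S) := by
  simp only [BlockedTriple, not_or, not_and, not_forall, not_not, exists_prop]

theorem not_blockedTriple_of_reaches (hy : ∃ s ∈ S, Reaches E y s) (hyS : y ∉ S) :
    ¬ BlockedTriple E S x y z :=
  not_blockedTriple_iff.mpr ⟨fun _ => hy, fun _ => hyS⟩

theorem not_blockedTriple_of_collider (hxy : E x y) (hzy : E z y)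
    (hy : ∃ s ∈ S, Reaches E y s) : ¬ BlockedTriple E S x y z :=
  not_blockedTriple_iff.mpr ⟨fun _ => hy, fun h => absurd ⟨hxy, hzy⟩ h⟩

theorem not_blockedTriple_of_edge_out (h : IsAcyclicD E) (hyz : E y z) (hyS : y ∉ S) :
    ¬ BlockedTriple E S x y z :=
  not_blockedTriple_iff.mpr ⟨fun hc => absurd hc.2 (h.asymm hyz), fun _ => hyS⟩

theorem not_mem_of_edge_out (h : IsAcyclicD E) (hyz : E y z)
    (hb : ¬ BlockedTriple E S x y z) : y ∉ S :=
  (not_blockedTriple_iff.mp hb).2 fun hc => h.asymm hyz hc.2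

theorem blockedTrail_iff_exists_getElem {p : List V} :
    BlockedTrail E S p ↔ ∃ i, ∃ h : i + 2 < p.length, BlockedTriple E S p[i] p[i + 1] p[i + 2] := by
  constructor
  · rintro ⟨l, x, y, z, r, rfl, hb⟩
    refine ⟨l.length, by simp, ?_⟩
    simpa [List.getElem_append_right] using hb
  · rintro ⟨i, hi, hb⟩
    refine ⟨p.take i, _, _, _, p.drop (i + 3), ?_, hb⟩
    conv_lhs => rw [← List.take_append_drop i p, List.drop_eq_getElem_cons (by omega),
      List.drop_eq_getElem_cons (by omega), List.drop_eq_getElem_cons hi]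

theorem not_blockedTrail_pair : ¬ BlockedTrail E S [a, b] := by
  simp [blockedTrail_iff_exists_getElem]

theorem blockedTrail_triple_iff : BlockedTrail E S [a, b, c] ↔ BlockedTriple E S a b c := by
  rw [blockedTrail_iff_exists_getElem]
  constructor
  · rintro ⟨i, hi, hb⟩
    obtain rfl : i = 0 := by simp only [List.length_cons, List.length_nil] at hi; omega
    exact hb
  · exact fun hb => ⟨0, by simp, hb⟩

/-! ### Active walks -/

/-- Walks are encoded as maps `ℕ → V` read on `0, …, n`; unlike trails they may repeat vertices. -/
def IsActiveWalk (E : V → V → Prop) (S : Set V) (n : ℕ) (w : ℕ → V) : Prop :=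
  (∀ i < n, Skel E (w i) (w (i + 1))) ∧
    ∀ i, i + 2 ≤ n → ¬ BlockedTriple E S (w i) (w (i + 1)) (w (i + 2))

theorem exists_isActiveWalk_of_isTrail {p : List V} (hp : IsTrail E a b p)
    (hb : ¬ BlockedTrail E S p) :
    ∃ n w, IsActiveWalk E S n w ∧ InjOn w (Iic n) ∧ 0 < n ∧ w 0 = a ∧ w n = b := by
  obtain ⟨hchain, hhead, hlast, hnodup, hlen⟩ := hp
  have hget : ∀ i (h : i < p.length), p.getD i a = p[i] := fun i h => List.getD_eq_getElem ..
  refine ⟨p.length - 1, fun i => p.getD i a, ⟨fun i hi => ?_, fun i hi => ?_⟩,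
    fun i hi j hj hij => ?_, by omega, ?_, ?_⟩
  · simpa only [hget i (by omega), hget (i + 1) (by omega)] using
      List.isChain_iff_getElem.mp hchain i (by omega)
  · have hi' : i + 2 < p.length := by omega
    simp only [blockedTrail_iff_exists_getElem, not_exists] at hb
    simpa only [hget i (by omega), hget (i + 1) (by omega), hget (i + 2) hi'] using hb i hi'
  · simp only [mem_Iic] at hi hj
    simp only [hget i (by omega), hget j (by omega)] at hij
    exact (List.Nodup.getElem_inj_iff hnodup).mp hij
  · show p.getD 0 a = a
    rw [hget 0 (by omega)]
    simpa [List.head?_eq_getElem?, List.getElem?_eq_getElem (show 0 < p.length by omega)]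
      using hhead
  · show p.getD (p.length - 1) a = b
    rw [hget _ (by omega)]
    simpa [List.getLast?_eq_getElem?,
      List.getElem?_eq_getElem (show p.length - 1 < p.length by omega)] using hlast

theorem exists_isTrail_of_isActiveWalk {n : ℕ} {w : ℕ → V} (hw : IsActiveWalk E S n w)
    (hinj : InjOn w (Iic n)) (hn : 0 < n) :
    ∃ p, IsTrail E (w 0) (w n) p ∧ ¬ BlockedTrail E S p := by
  refine ⟨(List.range (n + 1)).map w, ⟨?_, ?_, ?_, ?_, ?_⟩, ?_⟩
  · refine List.isChain_iff_getElem.mpr fun i hi => ?_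
    simp only [List.length_map, List.length_range] at hi
    simpa using hw.1 i (by omega)
  · simp [List.head?_eq_getElem?]
  · simp [List.getLast?_eq_getElem?]
  · refine List.Nodup.map_on (fun i hi j hj hij => hinj ?_ ?_ hij) List.nodup_range
    · simpa [Nat.lt_succ_iff] using hi
    · simpa [Nat.lt_succ_iff] using hj
  · simp only [List.length_map, List.length_range]; omega
  · rw [blockedTrail_iff_exists_getElem]
    rintro ⟨i, hi, hb⟩
    simp only [List.length_map, List.length_range] at hi
    exact hw.2 i (by omega) (by simpa using hb)

def skipAfter (w : ℕ → V) (i d : ℕ) : ℕ → V := fun m => if m ≤ i then w m else w (m + d)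

theorem skipAfter_zero {w : ℕ → V} {i d : ℕ} : skipAfter w i d 0 = w 0 := by
  simp [skipAfter]

theorem skipAfter_sub {w : ℕ → V} {n i d : ℕ} (h : i + d < n) : skipAfter w i d (n - d) = w n := by
  simp [skipAfter, show ¬ n - d ≤ i by omega, show n - d + d = n by omega]

theorem isActiveWalk_skipAfter {n i d : ℕ} {w : ℕ → V} (hw : IsActiveWalk E S n w)
    (hd : i + d ≤ n) (hskel : i + d < n → Skel E (w i) (w (i + d + 1)))
    (hleft : 0 < i → i + d < n → ¬ BlockedTriple E S (w (i - 1)) (w i) (w (i + d + 1)))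
    (hright : i + d + 2 ≤ n → ¬ BlockedTriple E S (w i) (w (i + d + 1)) (w (i + d + 2))) :
    IsActiveWalk E S (n - d) (skipAfter w i d) := by
  refine ⟨fun m hm => ?_, fun m hm => ?_⟩
  · rcases lt_trichotomy m i with hmi | rfl | hmi
    · simpa [skipAfter, hmi.le, Nat.succ_le_of_lt hmi] using hw.1 m (by omega)
    · simpa [skipAfter, Nat.add_right_comm] using hskel (by omega)
    · simpa [skipAfter, hmi.not_ge, (hmi.trans (Nat.lt_succ_self m)).not_ge,
        Nat.add_right_comm] using hw.1 (m + d) (by omega)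
  · rcases lt_trichotomy (m + 1) i with hmi | hmi | hmi
    · simpa [skipAfter, show m ≤ i by omega, show m + 1 ≤ i by omega, show m + 2 ≤ i by omega]
        using hw.2 m (by omega)
    · obtain rfl : m = i - 1 := by omega
      simpa [skipAfter, hmi, show i - 1 ≤ i by omega, show ¬ i - 1 + 2 ≤ i by omega,
        show i - 1 + 2 + d = i + d + 1 by omega] using hleft (by omega) (by omega)
    · rcases Nat.lt_or_ge i m with him | him
      · simpa [skipAfter, him.not_ge, show ¬ m + 1 ≤ i by omega, show ¬ m + 2 ≤ i by omega,
          Nat.add_right_comm] using hw.2 (m + d) (by omega)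
      · obtain rfl : m = i := by omega
        simpa [skipAfter, Nat.add_right_comm] using hright (by omega)

theorem isActiveWalk_update {n k : ℕ} {w : ℕ → V} {v : V} (hw : IsActiveWalk E S n w)
    (hk : k + 2 ≤ n) (hskel₁ : Skel E (w k) v) (hskel₂ : Skel E v (w (k + 2)))
    (hleft : 0 < k → ¬ BlockedTriple E S (w (k - 1)) (w k) v)
    (hmid : ¬ BlockedTriple E S (w k) v (w (k + 2)))
    (hright : k + 3 ≤ n → ¬ BlockedTriple E S v (w (k + 2)) (w (k + 3))) :
    IsActiveWalk E S n (Function.update w (k + 1) v) := by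
  refine ⟨fun m hm => ?_, fun m hm => ?_⟩
  · by_cases hfar : m < k ∨ k + 1 < m
    · simpa [Function.update_apply, show m ≠ k + 1 by omega, show m ≠ k by omega] using hw.1 m hm
    · rcases (by omega : m = k ∨ m = k + 1) with rfl | rfl
      · simpa using hskel₁
      · simpa using hskel₂
  · by_cases hfar : m + 2 < k + 1 ∨ k + 1 < m
    · simpa [Function.update_apply, show m ≠ k + 1 by omega, show m + 1 ≠ k + 1 by omega,
        show m ≠ k by omega, show m + 2 ≠ k + 1 by omega] using hw.2 m hm
    · rcases (by omega : m + 1 = k ∨ m = k ∨ m = k + 1) with rfl | rfl | rfl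
      · simpa [Function.update_apply, show m ≠ m + 1 + 1 by omega] using hleft (by omega)
      · simpa [Function.update_apply] using hmid
      · simpa [Function.update_apply, Nat.add_assoc] using hright (by omega)

theorem IsActiveWalk.reverse {n : ℕ} {w : ℕ → V} (hw : IsActiveWalk E S n w) :
    IsActiveWalk E S n (fun m => w (n - m)) := by
  refine ⟨fun m hm => ?_, fun m hm => ?_⟩
  · simpa [show n - m = n - (m + 1) + 1 by omega] using (hw.1 (n - (m + 1)) (by omega)).symm
  · have := hw.2 (n - (m + 2)) (by omega)
    rw [blockedTriple_comm] at this
    simpa [show n - (m + 2) + 2 = n - m by omega, show n - (m + 2) + 1 = n - (m + 1) by omega]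
      using this

theorem IsActiveWalk.directed_or_reaches_mem {n i : ℕ} {w : ℕ → V} (hw : IsActiveWalk E S n w)
    (hi : E (w i) (w (i + 1))) :
    ∀ m, i + 1 + m ≤ n → (E (w (i + m)) (w (i + 1 + m)) ∧ Reaches E (w (i + 1)) (w (i + 1 + m)))
      ∨ ∃ s ∈ S, Reaches E (w (i + 1)) s := by
  intro m
  induction m with
  | zero => exact fun _ => .inl ⟨hi, .refl⟩
  | succ m ih =>
    intro hm
    rcases ih (by omega) with ⟨hin, hreach⟩ | hS
    · rw [show i + (m + 1) = i + 1 + m by omega, show i + 1 + (m + 1) = i + 1 + m + 1 by omega]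
      rcases hw.1 (i + 1 + m) (by omega) with hout | hback
      · exact .inl ⟨hout, hreach.tail hout⟩
      · have hcoll := hw.2 (i + m) (by omega)
        rw [show i + m + 1 = i + 1 + m by omega, show i + m + 2 = i + 1 + m + 1 by omega] at hcoll
        obtain ⟨s, hs, hr⟩ := (not_blockedTriple_iff.mp hcoll).1 ⟨hin, hback⟩
        exact .inr ⟨s, hs, hreach.trans hr⟩
    · exact .inr hS

theorem IsActiveWalk.reaches_last_or_mem {n i : ℕ} {w : ℕ → V} (hw : IsActiveWalk E S n w)
    (hi : E (w i) (w (i + 1))) (hin : i < n) :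
    Reaches E (w i) (w n) ∨ ∃ s ∈ S, Reaches E (w i) s := by
  rcases hw.directed_or_reaches_mem hi (n - i - 1) (by omega) with ⟨-, hr⟩ | ⟨s, hs, hr⟩
  · rw [show i + 1 + (n - i - 1) = n by omega] at hr
    exact .inl (.head hi hr)
  · exact .inr ⟨s, hs, .head hi hr⟩

theorem mem_ancSet_of_reaches {W : Set V} (hxy : Reaches E x y) (hy : y ∈ AncSet E W) :
    x ∈ AncSet E W :=
  let ⟨w, hw, hyw⟩ := hy; ⟨w, hw, hxy.trans hyw⟩

theorem IsActiveWalk.mem_ancSet {n k : ℕ} {w : ℕ → V} {W : Set V} (hw : IsActiveWalk E S n w)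
    (hS : S ⊆ AncSet E W) (h0 : w 0 ∈ W) (hn : w n ∈ W) (hk0 : 0 < k) (hkn : k < n) :
    w k ∈ AncSet E W := by
  have hS' : ∀ x, (∃ s ∈ S, Reaches E x s) → x ∈ AncSet E W :=
    fun x ⟨s, hs, hxs⟩ => mem_ancSet_of_reaches hxs (hS hs)
  rcases hw.1 k hkn with hout | hin
  · rcases hw.reaches_last_or_mem hout hkn with hr | hr
    · exact ⟨w n, hn, hr⟩
    · exact hS' _ hr
  have hprev := hw.1 (k - 1) (by omega)
  rw [show k - 1 + 1 = k by omega] at hprev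
  rcases hprev with hprev | hout
  · have hcoll := hw.2 (k - 1) (by omega)
    rw [show k - 1 + 1 = k by omega, show k - 1 + 2 = k + 1 by omega] at hcoll
    exact hS' _ ((not_blockedTriple_iff.mp hcoll).1 ⟨hprev, hin⟩)
  · have hout' : E (w (n - (n - k))) (w (n - (n - k + 1))) := by
      rwa [show n - (n - k) = k by omega, show n - (n - k + 1) = k - 1 by omega]
    rcases hw.reverse.reaches_last_or_mem hout' (by omega) with hr | hr
    · rw [show n - (n - k) = k by omega, Nat.sub_self] at hr
      exact ⟨w 0, h0, hr⟩
    · rw [show n - (n - k) = k by omega] at hr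
      exact hS' _ hr

theorem IsActiveWalk.skipAfter_of_eq (h : IsAcyclicD E) {n i j : ℕ} {w : ℕ → V}
    (hw : IsActiveWalk E S n w) (hij : i < j) (hjn : j ≤ n) (heq : w i = w j) :
    IsActiveWalk E S (n - (j - i)) (skipAfter w i (j - i)) := by
  have hj : i + (j - i) = j := by omega
  refine isActiveWalk_skipAfter hw (by omega) (fun hjn' => ?_) (fun hi0 hjn' => ?_) (fun hjn' => ?_)
  · rw [hj, heq]; exact hw.1 j (by omega)
  · rw [hj]
    have hold_i := not_blockedTriple_iff.mp (hw.2 (i - 1) (by omega))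
    have hold_j := not_blockedTriple_iff.mp (hw.2 (j - 1) (by omega))
    rw [show i - 1 + 1 = i by omega, show i - 1 + 2 = i + 1 by omega] at hold_i
    rw [show j - 1 + 1 = j by omega, show j - 1 + 2 = j + 1 by omega, ← heq] at hold_j
    refine not_blockedTriple_iff.mpr ⟨fun ⟨hin, _⟩ => ?_, fun hnc hS => hnc ?_⟩
    · by_cases hback : E (w (i + 1)) (w i)
      · exact hold_i.1 ⟨hin, hback⟩
      · have hout : E (w i) (w (i + 1)) := (hw.1 i (by omega)).resolve_right hback
        rcases hw.directed_or_reaches_mem hout (j - i - 1) (by omega) with ⟨-, hr⟩ | ⟨s, hs, hr⟩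
        · rw [show i + 1 + (j - i - 1) = j by omega, ← heq] at hr
          exact absurd hr (h _ _ hout)
        · exact ⟨s, hs, .head hout hr⟩
    · exact ⟨(of_not_not fun hnc => hold_i.2 hnc hS).1, (of_not_not fun hnc => hold_j.2 hnc hS).2⟩
  · rw [hj, heq]
    exact hw.2 j (by omega)

theorem IsActiveWalk.exists_shorter_of_not_injOn (h : IsAcyclicD E) {n : ℕ} {w : ℕ → V}
    (hw : IsActiveWalk E S n w) (hinj : ¬ InjOn w (Iic n)) :
    ∃ m < n, ∃ w', IsActiveWalk E S m w' ∧ w' 0 = w 0 ∧ w' m = w n := by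
  obtain ⟨i, j, hi, hj, heq, hij⟩ : ∃ i j, i ≤ n ∧ j ≤ n ∧ w i = w j ∧ i < j := by
    simp only [InjOn, mem_Iic, not_forall] at hinj
    obtain ⟨i, hi, j, hj, heq, hne⟩ := hinj
    rcases Nat.lt_or_gt_of_ne hne with hlt | hlt
    · exact ⟨i, j, hi, hj, heq, hlt⟩
    · exact ⟨j, i, hj, hi, heq.symm, hlt⟩
  refine ⟨n - (j - i), by omega, _, hw.skipAfter_of_eq h hij hj heq, skipAfter_zero, ?_⟩
  rcases hj.lt_or_eq with hjn | rfl
  · exact skipAfter_sub (by omega)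
  · simp [skipAfter, show j - (j - i) = i by omega, heq]

theorem IsActiveWalk.exists_injOn (h : IsAcyclicD E) {n : ℕ} {w : ℕ → V}
    (hw : IsActiveWalk E S n w) (hne : w 0 ≠ w n) :
    ∃ m w', IsActiveWalk E S m w' ∧ InjOn w' (Iic m) ∧ 0 < m ∧ w' 0 = w 0 ∧ w' m = w n := by
  induction n using Nat.strong_induction_on generalizing w with
  | _ n ih =>
  by_cases hinj : InjOn w (Iic n)
  · exact ⟨n, w, hw, hinj, Nat.pos_of_ne_zero (by rintro rfl; exact hne rfl), rfl, rfl⟩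
  · obtain ⟨m, hm, w', hw', h0, hm'⟩ := hw.exists_shorter_of_not_injOn h hinj
    obtain ⟨k, w'', hw'', h''⟩ := ih m hm hw' (by rwa [h0, hm'])
    exact ⟨k, w'', hw'', by rwa [h0, hm'] at h''⟩

/-! ### Markov equivalence determines the pattern -/

/-- The vertices strictly between two non-adjacent vertices on an active trail would all be
colliders lying in the separating set, which acyclicity forbids. -/
theorem dSep_of_not_skel (h : IsAcyclicD E) (hns : ¬ Skel E a b) :
    DSep E {a} {b} (AncSet E {a, b} \ {a, b}) := by
  intro a' ha' b' hb' p hp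
  rw [mem_singleton_iff.mp ha', mem_singleton_iff.mp hb'] at hp
  by_contra hpb
  obtain ⟨n, w, hw, hinj, hn, h0, hn'⟩ := exists_isActiveWalk_of_isTrail hp hpb
  have hanc : ∀ k, 0 < k → k < n → w k ∈ AncSet E {a, b} :=
    fun k => hw.mem_ancSet (fun _ hs => hs.1) (by simp [h0]) (by simp [hn'])
  have hcoll : ∀ k, 0 < k → k < n → E (w (k - 1)) (w k) ∧ E (w (k + 1)) (w k) := by
    intro k hk0 hkn
    have hmem : w k ∈ AncSet E {a, b} \ {a, b} := by
      refine ⟨hanc k hk0 hkn, ?_⟩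
      rintro (hk | hk)
      · exact hinj.ne (mem_Iic.mpr hkn.le) (mem_Iic.mpr (Nat.zero_le n)) hk0.ne' (hk.trans h0.symm)
      · exact hinj.ne (mem_Iic.mpr hkn.le) (mem_Iic.mpr le_rfl) hkn.ne (hk.trans hn'.symm)
    have := hw.2 (k - 1) (by omega)
    rw [show k - 1 + 1 = k by omega, show k - 1 + 2 = k + 1 by omega] at this
    by_contra hnc
    exact (not_blockedTriple_iff.mp this).2 hnc hmem
  rcases (by omega : n = 1 ∨ n = 2 ∨ 3 ≤ n) with rfl | rfl | hn3
  · exact hns (h0 ▸ hn' ▸ hw.1 0 one_pos)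
  · obtain ⟨h01, h21⟩ := hcoll 1 one_pos one_lt_two
    obtain ⟨t, ht, hrt⟩ := hanc 1 one_pos one_lt_two
    rcases ht with rfl | rfl
    · exact h _ _ (h0 ▸ h01) hrt
    · exact h _ _ (hn' ▸ h21) hrt
  · exact h.asymm (hcoll 1 one_pos (by omega)).2 (hcoll 2 two_pos (by omega)).1

variable {E₁ E₂ : V → V → Prop}

theorem MarkovEquiv.symm (hme : MarkovEquiv E₁ E₂) : MarkovEquiv E₂ E₁ :=
  fun A B S hAB hAS hBS => (hme A B S hAB hAS hBS).symm

theorem MarkovEquiv.dSep_pair (hme : MarkovEquiv E₁ E₂) (hab : a ≠ b)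
    (h₂ : DSep E₂ {a} {b} (AncSet E₂ {a, b} \ {a, b})) :
    DSep E₁ {a} {b} (AncSet E₂ {a, b} \ {a, b}) :=
  (hme _ _ _ (by simpa using hab) (by simp) (by simp)).mpr h₂

theorem MarkovEquiv.skel (h₁ : IsAcyclicD E₁) (h₂ : IsAcyclicD E₂)
    (hme : MarkovEquiv E₁ E₂) (hs : Skel E₁ a b) : Skel E₂ a b := by
  by_contra hns
  have hab := h₁.ne_of_skel hs
  have htrail : IsTrail E₁ a b [a, b] :=
    ⟨List.isChain_pair.mpr hs, rfl, rfl, by simpa using hab, le_rfl⟩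
  exact not_blockedTrail_pair (hme.dSep_pair hab (dSep_of_not_skel h₂ hns) a rfl b rfl _ htrail)

theorem MarkovEquiv.immorality (h₁ : IsAcyclicD E₁)
    (hme : MarkovEquiv E₁ E₂) (hsk : ∀ a b, Skel E₁ a b ↔ Skel E₂ a b)
    (hi : Immorality E₁ a b c) : Immorality E₂ a b c := by
  obtain ⟨hac, hab, hcb, hns⟩ := hi
  have hns₂ : ¬ Skel E₂ a c := by rwa [← hsk]
  have htrail : IsTrail E₂ a c [a, b, c] :=
    ⟨List.isChain_cons_cons.mpr
        ⟨(hsk a b).mp (.inl hab), List.isChain_pair.mpr ((hsk b c).mp (.inr hcb))⟩, rfl, rfl, by simp [hac, h₁.ne_of_skel (.inl hab), h₁.ne_of_skel (.inr hcb)], by simp⟩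
  have hblocked := hme.symm.dSep_pair hac (dSep_of_not_skel h₁ hns) a rfl c rfl _ htrail
  rw [blockedTrail_triple_iff] at hblocked
  rcases hblocked with ⟨hcoll, -⟩ | ⟨-, ⟨t, ht, hbt⟩, -⟩
  · exact ⟨hac, hcoll.1, hcoll.2, hns₂⟩
  · rcases ht with rfl | rfl
    · exact absurd hbt (h₁ _ _ hab)
    · exact absurd hbt (h₁ _ _ hcb)

/-! ### Transfer of active walks between DAGs with the same pattern -/

def ReachesIn (E : V → V → Prop) : ℕ → V → V → Prop
  | 0, a, b => a = b
  | n + 1, a, b => ∃ c, E a c ∧ ReachesIn E n c b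

theorem reaches_iff_exists_reachesIn : Reaches E a b ↔ ∃ n, ReachesIn E n a b := by
  constructor
  · intro h
    induction h using Relation.ReflTransGen.head_induction_on with
    | refl => exact ⟨0, rfl⟩
    | head hac _ ih => exact ⟨ih.choose + 1, _, hac, ih.choose_spec⟩
  · rintro ⟨n, hn⟩
    induction n generalizing a with
    | zero => exact hn ▸ .refl
    | succ n ih => obtain ⟨c, hac, hcb⟩ := hn; exact .head hac (ih hcb)

/-- Junk value `0` when `y` does not reach `S`. -/
noncomputable def distTo (E : V → V → Prop) (S : Set V) (y : V) : ℕ :=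
  sInf {n | ∃ s ∈ S, ReachesIn E n y s}

theorem distTo_le {n : ℕ} {s : V} (hs : s ∈ S) (h : ReachesIn E n y s) : distTo E S y ≤ n :=
  Nat.sInf_le ⟨s, hs, h⟩

theorem exists_reachesIn_distTo (hy : ∃ s ∈ S, Reaches E y s) :
    ∃ s ∈ S, ReachesIn E (distTo E S y) y s := by
  obtain ⟨s, hs, hr⟩ := hy
  obtain ⟨n, hn⟩ := reaches_iff_exists_reachesIn.mp hr
  exact Nat.sInf_mem (s := {n | ∃ s ∈ S, ReachesIn E n y s}) ⟨n, s, hs, hn⟩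

theorem distTo_le_succ (hyd : E y z) (hz : ∃ s ∈ S, Reaches E z s) :
    distTo E S y ≤ distTo E S z + 1 := by
  obtain ⟨s, hs, hr⟩ := exists_reachesIn_distTo hz
  exact distTo_le (n := distTo E S z + 1) hs ⟨z, hyd, hr⟩

theorem exists_succ_distTo (hy : ∃ s ∈ S, Reaches E y s) (hyS : y ∉ S) :
    ∃ z, E y z ∧ (∃ s ∈ S, Reaches E z s) ∧ distTo E S z + 1 = distTo E S y := by
  obtain ⟨s, hs, hr⟩ := exists_reachesIn_distTo hy
  obtain ⟨k, hk⟩ : ∃ k, distTo E S y = k + 1 := by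
    refine Nat.exists_eq_succ_of_ne_zero fun h0 => hyS ?_
    rw [h0] at hr
    exact (show y = s from hr) ▸ hs
  rw [hk] at hr
  obtain ⟨z, hyz, hzs⟩ := hr
  have hz : ∃ s ∈ S, Reaches E z s := ⟨s, hs, reaches_iff_exists_reachesIn.mpr ⟨k, hzs⟩⟩
  exact ⟨z, hyz, hz, le_antisymm (by have := distTo_le hs hzs; omega)
    (hk ▸ distTo_le_succ hyz hz)⟩

theorem not_blockedTriple_of_edge_reaches (h : IsAcyclicD E) (hxy : E x y)
    (hy : ∃ s ∈ S, Reaches E y s) (hold : ¬ BlockedTriple E S u x y) (u' z' : V) :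
    ¬ BlockedTriple E S u' x z' :=
  let ⟨s, hs, hr⟩ := hy
  not_blockedTriple_of_reaches ⟨s, hs, .head hxy hr⟩ (not_mem_of_edge_out h hxy hold)

theorem IsActiveWalk.skipAfter_of_shielded (h : IsAcyclicD E) {n k : ℕ} {w : ℕ → V}
    (hw : IsActiveWalk E S n w) (hk : k + 2 ≤ n) (hxy : E (w k) (w (k + 1)))
    (hzy : E (w (k + 2)) (w (k + 1))) (hxz : Skel E (w k) (w (k + 2))) :
    IsActiveWalk E S (n - 1) (skipAfter w k 1) := by
  have hy := (not_blockedTriple_iff.mp (hw.2 k hk)).1 ⟨hxy, hzy⟩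
  refine isActiveWalk_skipAfter hw (by omega) (fun _ => hxz) (fun hk0 _ => ?_) (fun hkn => ?_)
  · have hold := hw.2 (k - 1) (by omega)
    rw [show k - 1 + 1 = k by omega, show k - 1 + 2 = k + 1 by omega] at hold
    exact not_blockedTriple_of_edge_reaches h hxy hy hold _ _
  · have hold := blockedTriple_comm.not.mp (hw.2 (k + 1) (by omega))
    refine blockedTriple_comm.not.mp (not_blockedTriple_of_edge_reaches h hzy hy hold _ _)

noncomputable def walkCost (E : V → V → Prop) (S : Set V) (n : ℕ) (w : ℕ → V) : ℕ :=
  ∑ i ∈ Finset.range (n + 1), distTo E S (w i)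

theorem walkCost_update_lt {n k : ℕ} {w : ℕ → V} {d : V} (hk : k ≤ n)
    (hd : distTo E S d < distTo E S (w k)) :
    walkCost E S n (Function.update w k d) < walkCost E S n w := by
  refine Finset.sum_lt_sum (fun i _ => ?_) ⟨k, Finset.mem_range.mpr (by omega), by simpa using hd⟩
  rcases eq_or_ne i k with rfl | hik
  · simpa using hd.le
  · simp [Function.update_of_ne hik]

/-- Verma and Pearl call the skeleton together with the immoralities the *pattern* of a DAG. -/
structure SamePattern (E₁ E₂ : V → V → Prop) : Prop where
  skel : ∀ a b, Skel E₁ a b ↔ Skel E₂ a b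
  imm : ∀ a b c, Immorality E₁ a b c ↔ Immorality E₂ a b c

namespace SamePattern

theorem symm (hP : SamePattern E₁ E₂) : SamePattern E₂ E₁ :=
  ⟨fun a b => (hP.skel a b).symm, fun a b c => (hP.imm a b c).symm⟩

theorem edge (hP : SamePattern E₁ E₂) (hxy : E₁ x y) : E₂ x y ∨ E₂ y x :=
  (hP.skel x y).mp (.inl hxy)

/-- If `y → d` is reversed in `E₂`, any edge `x → y` common to both graphs is shielded by
`x → d` in `E₁`: otherwise `x → y ← d` would be an immorality of `E₂` but not of `E₁`. -/
theorem edge_of_reversed (h₁ : IsAcyclicD E₁) (hP : SamePattern E₁ E₂) {d : V}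
    (hxy : E₁ x y) (hxy₂ : E₂ x y) (hyd : E₁ y d) (hdy : E₂ d y) : E₁ x d := by
  have hxd : Skel E₁ x d := by
    by_contra hns
    have hne : x ≠ d := fun h => h₁.asymm hxy (h ▸ hyd)
    have := (hP.imm x y d).mpr ⟨hne, hxy₂, hdy, fun h => hns ((hP.skel x d).mpr h)⟩
    exact h₁.asymm hyd this.2.2.1
  exact hxd.resolve_right (h₁.not_cycle₃ hxy hyd)

/-- The first edge `y → d` of a shortest `E₁`-path into `S` is reversed in `E₂`: otherwise, by
induction, the next edge `d → d'` is, and `edge_of_reversed` gives the shortcut `y → d'`. -/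
theorem exists_reversed_child (h₁ : IsAcyclicD E₁) (hP : SamePattern E₁ E₂) (y : V)
    (hy₁ : ∃ s ∈ S, Reaches E₁ y s) (hy₂ : ¬ ∃ s ∈ S, Reaches E₂ y s) :
    ∃ d, E₁ y d ∧ E₂ d y ∧ (∃ s ∈ S, Reaches E₁ d s) ∧ distTo E₁ S d < distTo E₁ S y := by
  induction hk : distTo E₁ S y using Nat.strong_induction_on generalizing y with
  | _ k ih =>
  have hyS : y ∉ S := fun hyS => hy₂ ⟨y, hyS, .refl⟩
  obtain ⟨d, hyd, hd₁, hdist⟩ := exists_succ_distTo hy₁ hyS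
  rcases hP.edge hyd with hyd₂ | hdy₂
  · exfalso
    have hd₂ : ¬ ∃ s ∈ S, Reaches E₂ d s := fun ⟨s, hs, hr⟩ => hy₂ ⟨s, hs, .head hyd₂ hr⟩
    obtain ⟨d', hdd', hd'd, hd'₁, hlt⟩ := ih _ (by omega) d hd₁ hd₂ rfl
    have hyd' := hP.edge_of_reversed h₁ hyd hyd₂ hdd' hd'd
    have := distTo_le_succ hyd' hd'₁
    omega
  · exact ⟨d, hyd, hdy₂, hd₁, by omega⟩

theorem not_blockedTriple_skip (h₁ : IsAcyclicD E₁) (h₂ : IsAcyclicD E₂)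
    (hP : SamePattern E₁ E₂) (hxy : Skel E₁ x y) (hyz : Skel E₁ y z)
    (hnc : ¬ (E₁ x y ∧ E₁ z y)) (hxy₂ : E₂ x y) (hold : ¬ BlockedTriple E₁ S u x y)
    (huy : u ≠ y) (hshield : ¬ (E₁ u x ∧ E₁ y x ∧ Skel E₁ u y)) :
    ¬ BlockedTriple E₁ S u x z := by
  have hnoc : ¬ (E₁ u x ∧ E₁ y x) := fun ⟨hux, hyx⟩ => by
    have hns : ¬ Skel E₁ u y := fun hs => hshield ⟨hux, hyx, hs⟩
    exact h₂.asymm hxy₂ ((hP.imm u x y).mp ⟨huy, hux, hyx, hns⟩).2.2.1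
  refine not_blockedTriple_iff.mpr
    ⟨fun ⟨hux, hzx⟩ => ?_, fun _ => (not_blockedTriple_iff.mp hold).2 hnoc⟩
  have hxy₁ : E₁ x y := hxy.resolve_right fun hyx => hnoc ⟨hux, hyx⟩
  have hyz₁ : E₁ y z := hyz.resolve_right fun hzy => hnc ⟨hxy₁, hzy⟩
  exact absurd hzx (h₁.not_cycle₃ hxy₁ hyz₁)

theorem skipAfter_of_collider₂ (h₁ : IsAcyclicD E₁) (h₂ : IsAcyclicD E₂)
    (hP : SamePattern E₁ E₂) {n k : ℕ} {w : ℕ → V} (hw : IsActiveWalk E₁ S n w)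
    (hinj : InjOn w (Iic n))
    (hshield : ∀ i, i + 2 ≤ n →
      ¬ (E₁ (w i) (w (i + 1)) ∧ E₁ (w (i + 2)) (w (i + 1)) ∧ Skel E₁ (w i) (w (i + 2))))
    (hk : k + 2 ≤ n) (hnc : ¬ (E₁ (w k) (w (k + 1)) ∧ E₁ (w (k + 2)) (w (k + 1))))
    (hxz : Skel E₁ (w k) (w (k + 2))) (hxy₂ : E₂ (w k) (w (k + 1)))
    (hzy₂ : E₂ (w (k + 2)) (w (k + 1))) :
    IsActiveWalk E₁ S (n - 1) (skipAfter w k 1) := by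
  refine isActiveWalk_skipAfter hw (by omega) (fun _ => hxz) (fun hk0 _ => ?_) (fun hkn => ?_)
  · have hold := hw.2 (k - 1) (by omega)
    have hsh := hshield (k - 1) (by omega)
    rw [show k - 1 + 1 = k by omega, show k - 1 + 2 = k + 1 by omega] at hold hsh
    exact hP.not_blockedTriple_skip h₁ h₂ (hw.1 k (by omega)) (hw.1 (k + 1) (by omega)) hnc hxy₂
      hold (hinj.ne (mem_Iic.mpr (by omega)) (mem_Iic.mpr (by omega)) (by omega)) hsh
  · have hold := blockedTriple_comm.not.mp (hw.2 (k + 1) (by omega))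
    have hsh := hshield (k + 1) (by omega)
    rw [show k + 1 + 1 = k + 2 by omega, show k + 1 + 2 = k + 3 by omega] at hold hsh
    refine blockedTriple_comm.not.mp (hP.not_blockedTriple_skip h₁ h₂
      (hw.1 (k + 1) (by omega)).symm (hw.1 k (by omega)).symm (fun h => hnc h.symm) hzy₂
      hold (hinj.ne (mem_Iic.mpr (by omega)) (mem_Iic.mpr (by omega)) (by omega))
      fun h => hsh ⟨h.2.1, h.1, h.2.2.symm⟩)

theorem exists_update_of_lost_collider (h₁ : IsAcyclicD E₁) (hP : SamePattern E₁ E₂)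
    {n k : ℕ} {w : ℕ → V} (hw : IsActiveWalk E₁ S n w) (hk : k + 2 ≤ n) (hxz : w k ≠ w (k + 2))
    (hns : ¬ Skel E₁ (w k) (w (k + 2))) (hxy : E₁ (w k) (w (k + 1)))
    (hzy : E₁ (w (k + 2)) (w (k + 1))) (hy₂ : ¬ ∃ s ∈ S, Reaches E₂ (w (k + 1)) s) :
    ∃ d, IsActiveWalk E₁ S n (Function.update w (k + 1) d) ∧
      distTo E₁ S d < distTo E₁ S (w (k + 1)) := by
  obtain ⟨-, hxy₂, hzy₂, -⟩ := (hP.imm _ _ _).mp ⟨hxz, hxy, hzy, hns⟩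
  obtain ⟨d, hyd, hdy, hd, hlt⟩ := hP.exists_reversed_child h₁ _
    ((not_blockedTriple_iff.mp (hw.2 k hk)).1 ⟨hxy, hzy⟩) hy₂
  have hxd := hP.edge_of_reversed h₁ hxy hxy₂ hyd hdy
  have hzd := hP.edge_of_reversed h₁ hzy hzy₂ hyd hdy
  refine ⟨d, isActiveWalk_update hw hk (.inl hxd) (.inr hzd) (fun hk0 => ?_)
    (not_blockedTriple_of_collider hxd hzd hd) (fun hkn => ?_), hlt⟩
  · have hold := hw.2 (k - 1) (by omega)
    rw [show k - 1 + 1 = k by omega, show k - 1 + 2 = k + 1 by omega] at hold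
    exact not_blockedTriple_of_edge_out h₁ hxd (not_mem_of_edge_out h₁ hxy hold)
  · have hold := blockedTriple_comm.not.mp (hw.2 (k + 1) (by omega))
    rw [show k + 1 + 1 = k + 2 by omega, show k + 1 + 2 = k + 3 by omega] at hold
    exact blockedTriple_comm.not.mp
      (not_blockedTriple_of_edge_out h₁ hzd (not_mem_of_edge_out h₁ hzy hold))

theorem not_blockedTriple₂ (hP : SamePattern E₁ E₂) (hold : ¬ BlockedTriple E₁ S x y z)
    (hxz : x ≠ z) (hshield : ¬ (E₁ x y ∧ E₁ z y ∧ Skel E₁ x z))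
    (hshield₂ : ¬ (¬ (E₁ x y ∧ E₁ z y) ∧ Skel E₁ x z ∧ E₂ x y ∧ E₂ z y))
    (hreach : E₁ x y ∧ E₁ z y → ∃ s ∈ S, Reaches E₂ y s) :
    ¬ BlockedTriple E₂ S x y z := by
  by_cases hc : E₁ x y ∧ E₁ z y
  · have hns : ¬ Skel E₁ x z := fun h => hshield ⟨hc.1, hc.2, h⟩
    obtain ⟨-, hxy₂, hzy₂, -⟩ := (hP.imm x y z).mp ⟨hxz, hc.1, hc.2, hns⟩
    exact not_blockedTriple_of_collider hxy₂ hzy₂ (hreach hc)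
  · refine not_blockedTriple_iff.mpr ⟨fun hc₂ => ?_, fun _ => (not_blockedTriple_iff.mp hold).2 hc⟩
    by_cases hxz₁ : Skel E₁ x z
    · exact absurd ⟨hc, hxz₁, hc₂⟩ hshield₂
    · have hns : ¬ Skel E₂ x z := fun h => hxz₁ ((hP.skel x z).mpr h)
      obtain ⟨-, hxy, hzy, -⟩ := (hP.imm x y z).mpr ⟨hxz, hc₂.1, hc₂.2, hns⟩
      exact absurd ⟨hxy, hzy⟩ hc

theorem isActiveWalk₂ (hP : SamePattern E₁ E₂) {n : ℕ} {w : ℕ → V}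
    (hw : IsActiveWalk E₁ S n w) (hinj : InjOn w (Iic n))
    (hshield : ∀ k, k + 2 ≤ n →
      ¬ (E₁ (w k) (w (k + 1)) ∧ E₁ (w (k + 2)) (w (k + 1)) ∧ Skel E₁ (w k) (w (k + 2))))
    (hshield₂ : ∀ k, k + 2 ≤ n → ¬ (¬ (E₁ (w k) (w (k + 1)) ∧ E₁ (w (k + 2)) (w (k + 1))) ∧
      Skel E₁ (w k) (w (k + 2)) ∧ E₂ (w k) (w (k + 1)) ∧ E₂ (w (k + 2)) (w (k + 1))))
    (hreach : ∀ k, k + 2 ≤ n → E₁ (w k) (w (k + 1)) ∧ E₁ (w (k + 2)) (w (k + 1)) →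
      ∃ s ∈ S, Reaches E₂ (w (k + 1)) s) :
    IsActiveWalk E₂ S n w :=
  ⟨fun i hi => (hP.skel _ _).mp (hw.1 i hi), fun k hk => hP.not_blockedTriple₂ (hw.2 k hk)
    (hinj.ne (mem_Iic.mpr (by omega)) (mem_Iic.mpr hk) (by omega)) (hshield k hk)
    (hshield₂ k hk) (hreach k hk)⟩

theorem exists_lex_lt (h₁ : IsAcyclicD E₁) (h₂ : IsAcyclicD E₂) (hP : SamePattern E₁ E₂)
    {n : ℕ} {w : ℕ → V} (hw : IsActiveWalk E₁ S n w) (hw₂ : ¬ IsActiveWalk E₂ S n w) :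
    ∃ m w', IsActiveWalk E₁ S m w' ∧ w' 0 = w 0 ∧ w' m = w n ∧
      Prod.Lex (· < ·) (· < ·) (m, walkCost E₁ S m w') (n, walkCost E₁ S n w) := by
  by_cases hinj : ¬ InjOn w (Iic n)
  · obtain ⟨m, hm, w', hw', h0, hm'⟩ := hw.exists_shorter_of_not_injOn h₁ hinj
    exact ⟨m, w', hw', h0, hm', .left _ _ hm⟩
  rw [not_not] at hinj
  by_cases hC₁ : ∃ k, k + 2 ≤ n ∧
      E₁ (w k) (w (k + 1)) ∧ E₁ (w (k + 2)) (w (k + 1)) ∧ Skel E₁ (w k) (w (k + 2))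
  · obtain ⟨k, hk, hxy, hzy, hxz⟩ := hC₁
    exact ⟨n - 1, _, hw.skipAfter_of_shielded h₁ hk hxy hzy hxz, skipAfter_zero,
      skipAfter_sub (by omega), .left _ _ (by omega)⟩
  have hshield := fun k hk h => hC₁ ⟨k, hk, h⟩
  by_cases hC₂ : ∃ k, k + 2 ≤ n ∧ ¬ (E₁ (w k) (w (k + 1)) ∧ E₁ (w (k + 2)) (w (k + 1))) ∧
      Skel E₁ (w k) (w (k + 2)) ∧ E₂ (w k) (w (k + 1)) ∧ E₂ (w (k + 2)) (w (k + 1))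
  · obtain ⟨k, hk, hnc, hxz, hxy₂, hzy₂⟩ := hC₂
    exact ⟨n - 1, _, hP.skipAfter_of_collider₂ h₁ h₂ hw hinj hshield hk hnc hxz hxy₂ hzy₂,
      skipAfter_zero, skipAfter_sub (by omega), .left _ _ (by omega)⟩
  by_cases hC₃ : ∃ k, k + 2 ≤ n ∧ E₁ (w k) (w (k + 1)) ∧ E₁ (w (k + 2)) (w (k + 1)) ∧
      ¬ ∃ s ∈ S, Reaches E₂ (w (k + 1)) s
  · obtain ⟨k, hk, hxy, hzy, hy₂⟩ := hC₃
    obtain ⟨d, hwd, hlt⟩ := hP.exists_update_of_lost_collider h₁ hw hk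
      (hinj.ne (mem_Iic.mpr (by omega)) (mem_Iic.mpr hk) (by omega))
      (fun h => hshield k hk ⟨hxy, hzy, h⟩) hxy hzy hy₂
    exact ⟨n, _, hwd, by simp, by simp [Function.update_of_ne (show n ≠ k + 1 by omega)],
      .right _ (walkCost_update_lt (by omega) hlt)⟩
  exact absurd (hP.isActiveWalk₂ hw hinj hshield (fun k hk h => hC₂ ⟨k, hk, h⟩)
    fun k hk h => of_not_not fun hy => hC₃ ⟨k, hk, h.1, h.2, hy⟩) hw₂

theorem exists_isActiveWalk (h₁ : IsAcyclicD E₁) (h₂ : IsAcyclicD E₂) (hP : SamePattern E₁ E₂)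
    {n : ℕ} {w : ℕ → V} (hw : IsActiveWalk E₁ S n w) :
    ∃ m w', IsActiveWalk E₂ S m w' ∧ w' 0 = w 0 ∧ w' m = w n := by
  by_cases hw₂ : IsActiveWalk E₂ S n w
  · exact ⟨n, w, hw₂, rfl, rfl⟩
  obtain ⟨m, w', hw', h0, hm, hlt⟩ := hP.exists_lex_lt h₁ h₂ hw hw₂
  obtain ⟨k, w'', hw'', h0', hk⟩ := hP.exists_isActiveWalk h₁ h₂ hw'
  exact ⟨k, w'', hw'', h0'.trans h0, hk.trans hm⟩
termination_by (n, walkCost E₁ S n w)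
decreasing_by exact hlt

theorem dSep (h₁ : IsAcyclicD E₁) (h₂ : IsAcyclicD E₂) (hP : SamePattern E₁ E₂)
    {A B : Set V} (hd : DSep E₂ A B S) : DSep E₁ A B S := by
  intro a ha b hb p hp
  by_contra hpb
  obtain ⟨n, w, hw, hinj, hn, rfl, rfl⟩ := exists_isActiveWalk_of_isTrail hp hpb
  obtain ⟨m, w', hw', h0, hm⟩ := hP.exists_isActiveWalk h₁ h₂ hw
  have hne : w' 0 ≠ w' m := by
    rw [h0, hm]
    exact hinj.ne (mem_Iic.mpr (Nat.zero_le n)) (mem_Iic.mpr le_rfl) hn.ne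
  obtain ⟨k, v, hv, hvinj, hk, hv0, hvk⟩ := hw'.exists_injOn h₂ hne
  obtain ⟨q, hq, hqb⟩ := exists_isTrail_of_isActiveWalk hv hvinj hk
  exact hqb (hd _ (by rwa [hv0, h0]) _ (by rwa [hvk, hm]) q hq)

end SamePattern

end

theorem markov_equiv_iff_skeleton_and_immoralities_general
    {V : Type*}
    (E₁ E₂ : V → V → Prop) (h₁ : IsAcyclicD E₁) (h₂ : IsAcyclicD E₂) :
    MarkovEquiv E₁ E₂ ↔
      ((∀ a b, Skel E₁ a b ↔ Skel E₂ a b) ∧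
       (∀ a b c, Immorality E₁ a b c ↔ Immorality E₂ a b c)) := by
  constructor
  · intro hme
    have hsk : ∀ a b, Skel E₁ a b ↔ Skel E₂ a b :=
      fun a b => ⟨hme.skel h₁ h₂, hme.symm.skel h₂ h₁⟩
    exact ⟨hsk, fun a b c =>
      ⟨hme.immorality h₁ hsk, hme.symm.immorality h₂ fun a b => (hsk a b).symm⟩⟩
  · rintro ⟨hsk, himm⟩ A B S - - -
    have hP : SamePattern E₁ E₂ := ⟨hsk, himm⟩
    exact ⟨hP.symm.dSep h₂ h₁, hP.dSep h₁ h₂⟩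

/-- Verma–Pearl: two DAGs on the same vertex set are Markov equivalent iff they
have the same skeleton and the same immoralities. -/
theorem markov_equiv_iff_skeleton_and_immoralities
    {V : Type*} [Fintype V] [DecidableEq V]
    (E₁ E₂ : V → V → Prop) (h₁ : IsAcyclicD E₁) (h₂ : IsAcyclicD E₂) :
    MarkovEquiv E₁ E₂ ↔
      ((∀ a b, Skel E₁ a b ↔ Skel E₂ a b) ∧
       (∀ a b c, Immorality E₁ a b c ↔ Immorality E₂ a b c)) :=
  markov_equiv_iff_skeleton_and_immoralities_general E₁ E₂ h₁ h₂
end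

section
/- For random variables X, Y with regular conditional distribution p(Y | X = x) having cumulative distribution function F_x, if E is uniformly distributed on [0,1] and independent of X, then the random variable f(X, E) with f(x, e) = F_x^{-1}(e) (generalized inverse) has conditional distribution given X = x equal to p(Y | X = x). -/
/-!
For `e ∈ (0, 1)` right continuity of the CDF gives `F⁻¹(e) ≤ y ↔ e ≤ F(y)`, so the quantile
function pushes the uniform law on `[0, 1]` forward to the law with CDF `F`. By independence
`(X, E)` has law `P_X ⊗ Unif[0, 1]`, and its image under `(x, e) ↦ (x, F_x⁻¹(e))` is therefore
`P_X ⊗ κ`, which determines the conditional distribution `P_X`-almost everywhere.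
-/

open MeasureTheory ProbabilityTheory Set Filter Topology

namespace ProbabilityTheory

/-- The infimum is only meaningful for `e ∈ (0, 1)`; the value `0` elsewhere makes the quantile
function of a kernel jointly measurable. -/
noncomputable def quantile (μ : Measure ℝ) (e : ℝ) : ℝ :=
  if e ∈ Ioo 0 1 then sInf {y | e ≤ cdf μ y} else 0

variable {μ : Measure ℝ}

lemma quantile_of_mem {e : ℝ} (he : e ∈ Ioo 0 1) :
    quantile μ e = sInf {y | e ≤ cdf μ y} :=
  if_pos he

lemma quantile_of_notMem {e : ℝ} (he : e ∉ Ioo 0 1) : quantile μ e = 0 :=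
  if_neg he

theorem quantile_le_iff [IsProbabilityMeasure μ] {e : ℝ} (he : e ∈ Ioo 0 1) (y : ℝ) :
    quantile μ e ≤ y ↔ e ≤ cdf μ y := by
  set S := {y | e ≤ cdf μ y}
  have hne : S.Nonempty :=
    ((tendsto_cdf_atTop μ).eventually (eventually_gt_nhds he.2)).exists.imp fun _ h => h.le
  have hbdd : BddBelow S := by
    obtain ⟨z₀, hz₀⟩ :=
      eventually_atBot.1 ((tendsto_cdf_atBot μ).eventually (eventually_lt_nhds he.1))
    exact ⟨z₀, fun z hz => le_of_not_gt fun hlt => (hz₀ z hlt.le).not_ge hz⟩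
  -- Right continuity of the CDF puts the infimum in `S`.
  have hmem : sInf S ∈ S := by
    refine ge_of_tendsto (((cdf μ).right_continuous _).mono Ioi_subset_Ici_self) ?_
    filter_upwards [self_mem_nhdsWithin] with z hz
    obtain ⟨s, hs, hsz⟩ := exists_lt_of_csInf_lt hne hz
    exact hs.trans ((cdf μ).mono hsz.le)
  rw [quantile_of_mem he]
  exact ⟨fun h => hmem.trans ((cdf μ).mono h), fun h => csInf_le hbdd h⟩

lemma ae_mem_Ioo_uniform : ∀ᵐ e ∂volume.restrict (Icc (0 : ℝ) 1), e ∈ Ioo 0 1 := by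
  rw [← Measure.restrict_congr_set Ioo_ae_eq_Icc]
  exact ae_restrict_mem measurableSet_Ioo

lemma Kernel.measurable_quantile {α : Type*} [MeasurableSpace α] (κ : Kernel α ℝ)
    [IsMarkovKernel κ] : Measurable fun p : α × ℝ => quantile (κ p.1) p.2 := by
  refine measurable_of_Iic fun y => ?_
  have hpre : (fun p : α × ℝ => quantile (κ p.1) p.2) ⁻¹' Iic y =
      (Prod.snd ⁻¹' Ioo 0 1).ite {p | p.2 ≤ cdf (κ p.1) y} {_p | 0 ≤ y} := by
    ext p
    by_cases hp : p.2 ∈ Ioo 0 1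
    · simp [Set.ite, hp, quantile_le_iff hp]
    · simp [Set.ite, hp, quantile_of_notMem hp]
  have hcdf : Measurable fun x => cdf (κ x) y := by
    simp_rw [cdf_eq_real, measureReal_def]
    exact (κ.measurable_coe measurableSet_Iic).ennreal_toReal
  rw [hpre]
  exact (measurable_snd measurableSet_Ioo).ite
    (measurableSet_le measurable_snd (hcdf.comp measurable_fst)) (MeasurableSet.const _)

lemma measurable_quantile (μ : Measure ℝ) [IsProbabilityMeasure μ] : Measurable (quantile μ) :=
  (Kernel.measurable_quantile (Kernel.const Unit μ)).comp (measurable_prodMk_left (x := ()))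

theorem map_quantile_uniform (μ : Measure ℝ) [IsProbabilityMeasure μ] :
    (volume.restrict (Icc (0 : ℝ) 1)).map (quantile μ) = μ := by
  have : IsProbabilityMeasure (volume.restrict (Icc (0 : ℝ) 1)) := ⟨by simp⟩
  have := Measure.isProbabilityMeasure_map (μ := volume.restrict (Icc (0 : ℝ) 1))
    (measurable_quantile μ).aemeasurable
  refine Measure.ext_of_Iic _ _ fun y => ?_
  have hpre : quantile μ ⁻¹' Iic y =ᵐ[volume.restrict (Icc (0 : ℝ) 1)] Iic (cdf μ y) := by
    filter_upwards [ae_mem_Ioo_uniform] with e he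
    exact propext (quantile_le_iff he y)
  rw [Measure.map_apply (measurable_quantile μ) measurableSet_Iic, measure_congr hpre,
    Measure.restrict_apply measurableSet_Iic, ← ofReal_cdf μ y,
    ← Ici_inter_Iic, inter_left_comm, Iic_inter_Iic, Ici_inter_Iic, Real.volume_Icc,
    inf_eq_left.2 (cdf_le_one μ y), sub_zero]

end ProbabilityTheory

section StructuralRepresentation

variable {α β γ : Type*} [MeasurableSpace α] [MeasurableSpace β] [MeasurableSpace γ]

lemma MeasureTheory.Measure.map_prod_eq_compProd {μ : Measure α} [IsFiniteMeasure μ]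
    {ν : Measure β} [IsFiniteMeasure ν] {g : α × β → γ} (hg : Measurable g) {κ : Kernel α γ}
    [IsSFiniteKernel κ] (hκ : ∀ x, ν.map (fun b => g (x, b)) = κ x) :
    (μ.prod ν).map (fun p => (p.1, g p)) = μ ⊗ₘ κ := by
  refine Measure.ext_prod fun {s t} hs ht => ?_
  have hsect : ∀ x, ν (Prod.mk x ⁻¹' ((fun p => (p.1, g p)) ⁻¹' s ×ˢ t)) =
      s.indicator (fun x => κ x t) x := by
    intro x
    by_cases hx : x ∈ s
    · rw [indicator_of_mem hx, ← hκ x, Measure.map_apply (by fun_prop) ht]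
      congr 1 with b
      simp [hx]
    · rw [indicator_of_notMem hx, ← measure_empty (μ := ν)]
      congr 1 with b
      simp [hx]
  rw [Measure.map_apply (measurable_fst.prodMk hg) (hs.prod ht),
    Measure.prod_apply ((measurable_fst.prodMk hg) (hs.prod ht)),
    Measure.compProd_apply_prod hs ht]
  simp_rw [hsect]
  exact lintegral_indicator hs _

lemma ProbabilityTheory.IndepFun.map_prodMk_eq_compProd {Ω : Type*} [MeasurableSpace Ω]
    {P : Measure Ω} [IsFiniteMeasure P] {X : Ω → α} {E : Ω → β} (hX : Measurable X)
    (hE : Measurable E) (hXE : IndepFun X E P) {g : α × β → γ} (hg : Measurable g) {κ : Kernel α γ}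
    [IsSFiniteKernel κ] (hκ : ∀ x, (P.map E).map (fun b => g (x, b)) = κ x) :
    P.map (fun ω => (X ω, g (X ω, E ω))) = P.map X ⊗ₘ κ := by
  have hprod : P.map (fun ω => (X ω, E ω)) = (P.map X).prod (P.map E) :=
    (indepFun_iff_map_prod_eq_prod_map_map hX.aemeasurable hE.aemeasurable).1 hXE
  rw [← Measure.map_prod_eq_compProd hg hκ, ← hprod,
    Measure.map_map (measurable_fst.prodMk hg) (hX.prodMk hE)]
  rfl

end StructuralRepresentation

theorem structural_representation_of_conditional_general
    {Ω α : Type*} [MeasurableSpace Ω]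
    [MeasurableSpace α]
    (P : Measure Ω) [IsProbabilityMeasure P]
    (X : Ω → α) (E : Ω → ℝ) (hX : Measurable X) (hE : Measurable E)
    (κ : ProbabilityTheory.Kernel α ℝ) [ProbabilityTheory.IsMarkovKernel κ]
    (F : α → ℝ → ℝ) (hF : ∀ x y, F x y = (κ x (Iic y)).toReal)
    (f : α → ℝ → ℝ) (hf : ∀ x e, f x e = sInf {y : ℝ | e ≤ F x y})
    (hunif : P.map E = volume.restrict (Icc (0 : ℝ) 1))
    (hindep : IndepFun X E P) :
    ∀ᵐ x ∂(P.map X), condDistrib (fun ω => f (X ω) (E ω)) X P x = κ x := by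
  set q : α × ℝ → ℝ := fun p => quantile (κ p.1) p.2
  have hq : Measurable q := κ.measurable_quantile
  have hfq : (fun ω => f (X ω) (E ω)) =ᵐ[P] fun ω => q (X ω, E ω) := by
    filter_upwards [ae_of_ae_map hE.aemeasurable (hunif ▸ ae_mem_Ioo_uniform)] with ω hω
    simp only [q, quantile_of_mem hω, hf, hF, cdf_eq_real, measureReal_def]
  have hlaw : P.map (fun ω => (X ω, q (X ω, E ω))) = P.map X ⊗ₘ κ :=
    hindep.map_prodMk_eq_compProd hX hE hq fun x => hunif ▸ map_quantile_uniform (κ x)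
  refine condDistrib_ae_eq_of_measure_eq_compProd X
    ((hq.comp (hX.prodMk hE)).aemeasurable.congr hfq.symm) ?_
  rw [← hlaw]
  exact Measure.map_congr (hfq.mono fun ω h => congrArg (X ω, ·) h)

/-- Structural representation of a conditional distribution by the probability integral
transform: let `κ x` be the conditional law of `Y` given `X = x`, with CDF
`F x y = κ x (Iic y)` and quantile function `f x e = inf {y | e ≤ F x y}`.  If `E` is
uniform on `[0, 1]` and independent of `X`, then the conditional distribution of
`f (X, E)` given `X = x` is `κ x` (almost everywhere in `x`). -/
theorem structural_representation_of_conditional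
    {Ω α : Type*} [MeasurableSpace Ω] [StandardBorelSpace Ω] [Nonempty Ω]
    [MeasurableSpace α]
    (P : Measure Ω) [IsProbabilityMeasure P]
    (X : Ω → α) (E : Ω → ℝ) (hX : Measurable X) (hE : Measurable E)
    (κ : ProbabilityTheory.Kernel α ℝ) [ProbabilityTheory.IsMarkovKernel κ]
    (F : α → ℝ → ℝ) (hF : ∀ x y, F x y = (κ x (Iic y)).toReal)
    (f : α → ℝ → ℝ) (hf : ∀ x e, f x e = sInf {y : ℝ | e ≤ F x y})
    (hunif : P.map E = volume.restrict (Icc (0 : ℝ) 1))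
    (hindep : IndepFun X E P)
    (hmeas : Measurable fun ω => f (X ω) (E ω)) :
    ∀ᵐ x ∂(P.map X), condDistrib (fun ω => f (X ω) (E ω)) X P x = κ x :=
  structural_representation_of_conditional_general P X E hX hE κ F hF f hf hunif hindep
end

section
/- If a joint distribution factorizes according to a DAG D, and sets A, B are separated by S in the moral graph of the ancestral subgraph of D generated by A ∪ B ∪ S, then A ⊥⊥ B | S holds in the distribution. -/
open MeasureTheory ProbabilityTheory

/-- The event that the variables indexed by `W` take the values prescribed by `x`. -/
def eventOn {V Ω α : Type*} (X : V → Ω → α) (W : Set V) (x : V → α) : Set Ω :=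
  {ω | ∀ v ∈ W, X v ω = x v}

/-- Conditional independence of the families `(X_v)_{v ∈ A}` and `(X_v)_{v ∈ B}` given
`(X_v)_{v ∈ S}`, for discrete variables, via cross-multiplied factorization of
probability mass functions. -/
def CCI {V Ω α : Type*} [MeasurableSpace Ω] (P : Measure Ω)
    (X : V → Ω → α) (A B S : Set V) : Prop :=
  ∀ x : V → α,
    P (eventOn X S x) * P (eventOn X (A ∪ B ∪ S) x) =
      P (eventOn X (A ∪ S) x) * P (eventOn X (B ∪ S) x)

/-- The joint distribution factorizes according to the DAG `E`: the probability of any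
joint configuration is the product over vertices of the conditional probability of the
vertex's value given its parents' values. -/
def DAGFactorizes {V Ω α : Type*} [Fintype V] [MeasurableSpace Ω] (P : Measure Ω)
    (E : V → V → Prop) (X : V → Ω → α) : Prop :=
  ∀ x : V → α,
    P (eventOn X Set.univ x) =
      ∏ v : V, (P[|eventOn X {w | E w v} x]) {ω | X v ω = x v}

/-!
On an ancestral set `W` the factorisation restricts: `P (X_W = x)` is the product of the factors
of the vertices of `W`. This follows by adding the sources of the complement one at a time and
summing them out; since a factor is `0` where the event on its parents is null, this only gives
`≤`, and comparing total masses upgrades it to equality.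

Take `W` the ancestral set of `A ∪ B ∪ S`, and `C` the set of vertices reachable from `A \ S`
in the moral graph of `W` avoiding `S`. Every family is a clique of the moral graph, so it lies in `C ∪ S` or misses `C`. Grouping the
factors accordingly writes `P (X_W = ·)` as `f * h` with `f` depending only on the coordinates in
`C ∪ S` and `h` only on those in `W \ C`. Separation puts `B` outside `C`, and marginalising this
product onto `S`, `A ∪ S`, `B ∪ S` and `A ∪ B ∪ S` gives the cross-multiplied identity.
-/

open Finset Function Relation
open scoped ENNReal

theorem ENNReal.eq_of_le_of_sum_le {ι : Type*} [DecidableEq ι] {s : Finset ι}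
    {f g : ι → ℝ≥0∞} (hle : ∀ i ∈ s, f i ≤ g i) (hsum : ∑ i ∈ s, g i ≤ ∑ i ∈ s, f i)
    (hfin : ∑ i ∈ s, f i ≠ ⊤) {i : ι} (hi : i ∈ s) : f i = g i := by
  refine le_antisymm (hle i hi)
    (ENNReal.le_of_add_le_add_right (a := ∑ j ∈ s.erase i, g j) ?_ ?_)
  · exact ne_top_of_le_ne_top (hsum.trans_lt hfin.lt_top).ne
      (sum_le_sum_of_subset (erase_subset i s))
  · calc g i + ∑ j ∈ s.erase i, g j = ∑ j ∈ s, g j := add_sum_erase s g hi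
      _ ≤ ∑ j ∈ s, f j := hsum
      _ = f i + ∑ j ∈ s.erase i, f j := (add_sum_erase s f hi).symm
      _ ≤ f i + ∑ j ∈ s.erase i, g j :=
        add_le_add_right (sum_le_sum fun j hj => hle j (mem_of_mem_erase hj)) _

namespace IsAcyclicD

variable {V : Type*} {E : V → V → Prop}

theorem irrefl_s8 (hE : IsAcyclicD E) (v : V) : ¬ E v v :=
  fun h => hE v v h ReflTransGen.refl

theorem swap (hE : IsAcyclicD E) : IsAcyclicD (swap E) :=
  fun a b hab hba => hE b a hab (reflTransGen_swap.1 hba)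

theorem wellFounded [Finite V] (hE : IsAcyclicD E) : WellFounded E := by
  have : Std.Irrefl (TransGen E) := ⟨fun a h => by
    obtain ⟨b, hab, hba⟩ := TransGen.head'_iff.1 h
    exact hE a b hab hba⟩
  exact Subrelation.wf TransGen.single (Finite.wellFounded_of_trans_of_irrefl _)

end IsAcyclicD

section Paths

variable {V : Type*} {G : V → V → Prop}

theorem exists_uPath_of_reflTransGen {a b : V} (h : ReflTransGen G a b) :
    ∃ p, UPath G a b p := by
  induction h using ReflTransGen.head_induction_on with
  | refl => exact ⟨[b], List.isChain_singleton b, rfl, rfl, List.nodup_singleton b⟩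
  | @head a c hac _ ih =>
    obtain ⟨p, hch, hhd, hlast, hnd⟩ := ih
    by_cases hap : a ∈ p
    · -- cut the path at its earlier visit of `a`
      obtain ⟨p₁, p₂, rfl⟩ := List.append_of_mem hap
      refine ⟨a :: p₂, hch.right_of_append, rfl, ?_,
        hnd.sublist (List.sublist_append_right _ _)⟩
      rwa [List.getLast?_append_of_ne_nil _ (List.cons_ne_nil _ _)] at hlast
    · have hp : p ≠ [] := by rintro rfl; simp at hhd
      obtain ⟨c', p', rfl⟩ := List.exists_cons_of_ne_nil hp
      obtain rfl : c' = c := by simpa using hhd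
      exact ⟨a :: c' :: p', List.isChain_cons_cons.2 ⟨hac, hch⟩, rfl, by simpa using hlast,
        hnd.cons hap⟩

end Paths

section Configurations

variable {V α : Type*} [Fintype V] [Fintype α]

open Classical in
noncomputable def freeConfigs (x : V → α) (F : Set V) : Finset (V → α) :=
  {g | Set.EqOn g x Fᶜ}

theorem mem_freeConfigs {x g : V → α} {F : Set V} :
    g ∈ freeConfigs x F ↔ Set.EqOn g x Fᶜ := by
  simp [freeConfigs]

theorem self_mem_freeConfigs (x : V → α) (F : Set V) : x ∈ freeConfigs x F :=
  mem_freeConfigs.2 fun _ _ => rfl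

theorem freeConfigs_empty (x : V → α) : freeConfigs x ∅ = {x} := by
  ext g
  simp [mem_freeConfigs, Set.EqOn, funext_iff]

theorem sum_freeConfigs_insert [DecidableEq V] {M : Type*} [AddCommMonoid M] (x : V → α)
    {F : Set V} {v : V} (hv : v ∉ F) (φ : (V → α) → M) :
    ∑ g ∈ freeConfigs x (insert v F), φ g =
      ∑ g ∈ freeConfigs x F, ∑ a, φ (update g v a) := by
  rw [← sum_product']
  refine sum_nbij' (fun g => (update g v (x v), g v)) (fun p => update p.1 v p.2)
    ?_ ?_ ?_ ?_ ?_
  · intro g hg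
    simp only [mem_product, mem_freeConfigs, mem_univ, and_true] at hg ⊢
    intro u hu
    by_cases huv : u = v
    · subst huv; simp
    · simpa [huv] using hg (by simpa [huv] using hu)
  · rintro ⟨g, a⟩ hg
    simp only [mem_product, mem_freeConfigs, mem_univ, and_true] at hg ⊢
    intro u hu
    have huv : u ≠ v := by rintro rfl; simp at hu
    simpa [huv] using hg (by simpa [huv] using hu)
  · intro g _
    simp
  · rintro ⟨g, a⟩ hg
    simp only [mem_product, mem_freeConfigs, mem_univ, and_true] at hg
    simp [show g v = x v from hg hv]
  · intro g _
    simp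

theorem sum_freeConfigs_union {M : Type*} [AddCommMonoid M] (x : V → α) {C₁ C₂ : Set V}
    [DecidablePred (· ∈ C₁)] (hd : Disjoint C₁ C₂) (φ : (V → α) → M) :
    ∑ g ∈ freeConfigs x (C₁ ∪ C₂), φ g =
      ∑ p ∈ freeConfigs x C₁ ×ˢ freeConfigs x C₂, φ (C₁.piecewise p.1 p.2) := by
  classical
  have hinv : ∀ g ∈ freeConfigs x (C₁ ∪ C₂),
      C₁.piecewise (C₁.piecewise g x) (C₂.piecewise g x) = g := by
    intro g hg
    ext u
    by_cases h₁ : u ∈ C₁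
    · simp [h₁]
    by_cases h₂ : u ∈ C₂
    · simp [h₁, h₂]
    · simp [h₁, h₂, mem_freeConfigs.1 hg (by simp [h₁, h₂] : u ∈ (C₁ ∪ C₂)ᶜ)]
  refine sum_nbij' (fun g => (C₁.piecewise g x, C₂.piecewise g x))
    (fun p => C₁.piecewise p.1 p.2) ?_ ?_ hinv ?_ fun g hg => by rw [hinv g hg]
  · intro g _
    simp only [mem_product, mem_freeConfigs]
    exact ⟨fun u hu => Set.piecewise_eq_of_notMem _ _ _ hu,
      fun u hu => Set.piecewise_eq_of_notMem _ _ _ hu⟩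
  · rintro ⟨g₁, g₂⟩ hg
    simp only [mem_product, mem_freeConfigs] at hg ⊢
    intro u hu
    simp only [Set.mem_compl_iff, Set.mem_union, not_or] at hu
    simp [hu.1, hg.2 hu.2]
  · rintro ⟨g₁, g₂⟩ hg
    simp only [mem_product, mem_freeConfigs] at hg
    ext u
    · by_cases h₁ : u ∈ C₁
      · simp [h₁]
      · simp [h₁, hg.1 h₁]
    · by_cases h₂ : u ∈ C₂
      · simp [h₂, Set.disjoint_right.1 hd h₂]
      · simp [h₂, hg.2 h₂]

theorem sum_freeConfigs_union_mul {M : Type*} [CommSemiring M] (x : V → α) {C₁ C₂ : Set V}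
    (hd : Disjoint C₁ C₂) (f h : (V → α) → M)
    (hf : ∀ g g', Set.EqOn g g' C₂ᶜ → f g = f g')
    (hh : ∀ g g', Set.EqOn g g' C₁ᶜ → h g = h g') :
    ∑ g ∈ freeConfigs x (C₁ ∪ C₂), f g * h g =
      (∑ g ∈ freeConfigs x C₁, f g) * ∑ g ∈ freeConfigs x C₂, h g := by
  classical
  rw [sum_freeConfigs_union x hd, sum_mul_sum, ← sum_product']
  refine sum_congr rfl fun p hp => ?_
  simp only [mem_product, mem_freeConfigs] at hp
  congr 1
  · refine hf _ _ fun u hu => ?_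
    by_cases h₁ : u ∈ C₁
    · simp [h₁]
    · simp [h₁, hp.1 h₁, hp.2 hu]
  · exact hh _ _ fun u hu => Set.piecewise_eq_of_notMem _ _ _ hu

end Configurations

section Events

variable {V Ω α : Type*} {X : V → Ω → α}

theorem eventOn_congr {W : Set V} {x y : V → α} (h : Set.EqOn x y W) :
    eventOn X W x = eventOn X W y := by
  ext ω
  exact forall₂_congr fun v hv => by rw [h hv]

theorem eventOn_empty (x : V → α) : eventOn X ∅ x = Set.univ := by
  simp [eventOn]

variable [MeasurableSpace Ω]

theorem measurableSet_eventOn [Countable V] [MeasurableSpace α] [MeasurableSingletonClass α]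
    (hX : ∀ v, Measurable (X v)) (W : Set V) (x : V → α) : MeasurableSet (eventOn X W x) := by
  have : eventOn X W x = ⋂ v ∈ W, X v ⁻¹' {x v} := by
    ext ω; simp [eventOn]
  rw [this]
  exact .biInter (Set.to_countable W) fun v _ => hX v (measurableSet_singleton _)

variable [Fintype V] [Fintype α] [MeasurableSpace α] [MeasurableSingletonClass α]
  (P : Measure Ω)

theorem measure_eventOn_eq_sum_freeConfigs (hX : ∀ v, Measurable (X v)) {T W : Set V}
    (hTW : T ⊆ W) (x : V → α) :
    P (eventOn X T x) = ∑ g ∈ freeConfigs x (W \ T), P (eventOn X W g) := by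
  classical
  have hdisj : (freeConfigs x (W \ T) : Set (V → α)).PairwiseDisjoint (eventOn X W) := by
    intro g hg g' hg' hne
    simp only [mem_coe, mem_freeConfigs] at hg hg'
    obtain ⟨u, hu⟩ := Function.ne_iff.1 hne
    have huW : u ∈ W := by
      by_contra huW
      exact hu ((hg (by simp [huW])).trans (hg' (by simp [huW])).symm)
    exact Set.disjoint_left.2 fun ω h₁ h₂ => hu ((h₁ u huW).symm.trans (h₂ u huW))
  have hunion : eventOn X T x = ⋃ g ∈ freeConfigs x (W \ T), eventOn X W g := by
    ext ω
    simp only [Set.mem_iUnion, mem_freeConfigs, exists_prop]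
    constructor
    · intro hω
      refine ⟨(W \ T).piecewise (fun v => X v ω) x,
        fun u hu => Set.piecewise_eq_of_notMem _ _ _ hu, fun u huW => ?_⟩
      by_cases huT : u ∈ T
      · simp [huT, hω u huT]
      · simp [huW, huT]
    · rintro ⟨g, hg, hω⟩ u huT
      rw [hω u (hTW huT), hg (by simp [huT])]
  rw [hunion, measure_biUnion_finset hdisj fun g _ => measurableSet_eventOn hX W g]

theorem sum_measure_eventOn_freeConfigs [IsProbabilityMeasure P] (hX : ∀ v, Measurable (X v))
    (W : Set V) (x : V → α) : ∑ g ∈ freeConfigs x W, P (eventOn X W g) = 1 := by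
  have h := measure_eventOn_eq_sum_freeConfigs P hX (Set.empty_subset W) x
  rwa [Set.sdiff_empty, eventOn_empty, measure_univ, eq_comm] at h

theorem measure_eventOn_eq_sum_update [DecidableEq V] (hX : ∀ v, Measurable (X v)) {T : Set V}
    {v : V} (hv : v ∉ T) (x : V → α) :
    P (eventOn X T x) = ∑ a, P (eventOn X (insert v T) (update x v a)) := by
  rw [measure_eventOn_eq_sum_freeConfigs P hX (Set.subset_insert v T),
    Set.insert_sdiff_of_notMem _ hv, Set.sdiff_self,
    sum_freeConfigs_insert x (Set.notMem_empty v), freeConfigs_empty, sum_singleton]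

end Events

section Factorization

variable {V Ω α : Type*} [MeasurableSpace Ω]

def family (E : V → V → Prop) (v : V) : Set V := insert v {w | E w v}

def IsAncestral (E : V → V → Prop) (W : Set V) : Prop := ∀ u ∈ W, ∀ w, E w u → w ∈ W

/-- The factor of vertex `v` in `DAGFactorizes`. -/
noncomputable def condFactor (P : Measure Ω) (E : V → V → Prop) (X : V → Ω → α) (v : V)
    (x : V → α) : ℝ≥0∞ :=
  P[|eventOn X {w | E w v} x] {ω | X v ω = x v}

variable {P : Measure Ω} {E : V → V → Prop} {X : V → Ω → α}

theorem condFactor_congr {v : V} {x y : V → α} (h : Set.EqOn x y (family E v)) :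
    condFactor P E X v x = condFactor P E X v y := by
  rw [condFactor, condFactor, eventOn_congr (h.mono (Set.subset_insert _ _)),
    h (Set.mem_insert v _)]

theorem condFactor_update_of_notMem_family [DecidableEq V] {u v : V} (h : v ∉ family E u)
    (x : V → α) (a : α) : condFactor P E X u (update x v a) = condFactor P E X u x :=
  condFactor_congr fun w hw => update_of_ne (by rintro rfl; exact h hw) a x

theorem sum_condFactor_update_le_one [DecidableEq V] [Fintype α] [MeasurableSpace α]
    [MeasurableSingletonClass α] (hX : ∀ v, Measurable (X v)) {v : V} (hv : ¬ E v v)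
    (x : V → α) : ∑ a, condFactor P E X v (update x v a) ≤ 1 := by
  have hfactor : ∀ a, condFactor P E X v (update x v a) =
      P[|eventOn X {w | E w v} x] (X v ⁻¹' {a}) := by
    intro a
    rw [condFactor, eventOn_congr fun w hw => update_of_ne (by rintro rfl; exact hv hw) a x,
      update_self]
    rfl
  simp_rw [hfactor]
  rw [sum_measure_preimage_singleton univ fun a _ => hX v (measurableSet_singleton a)]
  exact prob_le_one

variable [Fintype V] [Fintype α] [MeasurableSpace α] [MeasurableSingletonClass α]

theorem sum_prod_condFactor_le_one (hE : IsAcyclicD E) (hX : ∀ v, Measurable (X v))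
    (U : Finset V) (x : V → α) :
    ∑ g ∈ freeConfigs x U, ∏ u ∈ U, condFactor P E X u g ≤ 1 := by
  classical
  induction U using Finset.strongInduction with
  | H U ih =>
  rcases U.eq_empty_or_nonempty with rfl | hne
  · simp [freeConfigs_empty]
  -- sum out a sink `v` of `U` first: no other factor depends on `x v`
  obtain ⟨v, hvU, hsink⟩ := hE.swap.wellFounded.has_min (U : Set V) hne
  have hv : ∀ u ∈ U.erase v, v ∉ family E u := by
    intro u hu hvu
    rcases hvu with rfl | hvu
    · exact notMem_erase v U hu
    · exact hsink u (mem_of_mem_erase hu) hvu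
  calc ∑ g ∈ freeConfigs x U, ∏ u ∈ U, condFactor P E X u g
      = ∑ g ∈ freeConfigs x ↑(U.erase v), ∑ a, condFactor P E X v (update g v a) *
          ∏ u ∈ U.erase v, condFactor P E X u g := by
        conv_lhs => rw [← insert_erase hvU, coe_insert, sum_freeConfigs_insert x (by simp)]
        refine sum_congr rfl fun g _ => sum_congr rfl fun a _ => ?_
        rw [prod_insert (notMem_erase v U)]
        exact congrArg _
          (prod_congr rfl fun u hu => condFactor_update_of_notMem_family (hv u hu) g a)
    _ ≤ ∑ g ∈ freeConfigs x ↑(U.erase v), ∏ u ∈ U.erase v, condFactor P E X u g := by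
        refine sum_le_sum fun g _ => ?_
        rw [← sum_mul]
        exact mul_le_of_le_one_left' (sum_condFactor_update_le_one hX (hE.irrefl_s8 v) g)
    _ ≤ 1 := ih _ (erase_ssubset hvU)

theorem measure_eventOn_le_prod_condFactor [DecidableEq V] (hX : ∀ v, Measurable (X v))
    {U : Finset V} (hU : IsAncestral E U) {v : V} (hvU : v ∉ U) (hv : ¬ E v v)
    (hfact : ∀ y, P (eventOn X ↑(insert v U) y) = ∏ u ∈ insert v U, condFactor P E X u y)
    (y : V → α) : P (eventOn X U y) ≤ ∏ u ∈ U, condFactor P E X u y := by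
  have hfam : ∀ u ∈ U, v ∉ family E u := by
    rintro u hu (rfl | hvu)
    exacts [hvU hu, hvU (hU u hu v hvu)]
  -- the factor of `v` sums to `0`, not `1`, where the event on its parents is null
  calc P (eventOn X U y) = ∑ a, P (eventOn X (insert v U) (update y v a)) :=
        measure_eventOn_eq_sum_update P hX hvU y
    _ = (∑ a, condFactor P E X v (update y v a)) * ∏ u ∈ U, condFactor P E X u y := by
        rw [sum_mul]
        refine sum_congr rfl fun a _ => ?_
        rw [← coe_insert, hfact, prod_insert hvU]
        exact congrArg _
          (prod_congr rfl fun u hu => condFactor_update_of_notMem_family (hfam u hu) y a)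
    _ ≤ ∏ u ∈ U, condFactor P E X u y :=
        mul_le_of_le_one_left' (sum_condFactor_update_le_one hX hv y)

theorem measure_eventOn_eq_prod_condFactor_of_le [IsProbabilityMeasure P] (hE : IsAcyclicD E)
    (hX : ∀ v, Measurable (X v)) {U : Finset V}
    (hle : ∀ y, P (eventOn X U y) ≤ ∏ u ∈ U, condFactor P E X u y) (x : V → α) :
    P (eventOn X U x) = ∏ u ∈ U, condFactor P E X u x := by
  classical
  -- over the configurations of `U` the left side sums to `1`, the right side to at most `1`
  have htotal := sum_measure_eventOn_freeConfigs P hX U x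
  exact ENNReal.eq_of_le_of_sum_le (fun g _ => hle g)
    ((sum_prod_condFactor_le_one hE hX U x).trans htotal.ge) (by simp [htotal])
    (self_mem_freeConfigs x U)

theorem measure_eventOn_eq_prod_condFactor [IsProbabilityMeasure P] (hE : IsAcyclicD E)
    (hX : ∀ v, Measurable (X v)) (hfact : DAGFactorizes P E X) (U : Finset V)
    (hU : IsAncestral E U) (x : V → α) :
    P (eventOn X U x) = ∏ u ∈ U, condFactor P E X u x := by
  classical
  induction U using Finset.strongDownwardInductionOn (n := Fintype.card V) generalizing x with
  | H U ih =>
  by_cases hUuniv : U = univ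
  · subst hUuniv
    rw [coe_univ]
    exact hfact x
  obtain ⟨v, hvU, hsource⟩ := hE.wellFounded.has_min (↑U)ᶜ
    (by simpa [Set.nonempty_compl, ← coe_univ] using hUuniv)
  have hvU : v ∉ U := hvU
  have hanc : IsAncestral E ↑(insert v U) := by
    intro u hu w hw
    rcases mem_insert.1 hu with rfl | hu
    · exact mem_insert_of_mem (by_contra fun hwU => hsource w hwU hw)
    · exact mem_insert_of_mem (hU u hu w hw)
  exact measure_eventOn_eq_prod_condFactor_of_le hE hX (measure_eventOn_le_prod_condFactor hX hU
    hvU (hE.irrefl_s8 v) (ih (card_le_univ _) (ssubset_insert hvU) hanc)) x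
  | _ => exact card_le_univ U

end Factorization

section ConditionalIndependence

variable {V Ω α : Type*} [MeasurableSpace Ω] [Fintype V] [Fintype α] [MeasurableSpace α]
  [MeasurableSingletonClass α] {P : Measure Ω} {X : V → Ω → α}

theorem cci_of_measure_eventOn_eq_mul (hX : ∀ v, Measurable (X v)) {A B S C W : Set V}
    (hCW : C ⊆ W) (hSW : S ⊆ W) (hBW : B ⊆ W) (hA : A ⊆ C ∪ S)
    (hBC : Disjoint B C) (f h : (V → α) → ℝ≥0∞)
    (hf : ∀ g g', Set.EqOn g g' (C ∪ S) → f g = f g')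
    (hh : ∀ g g', Set.EqOn g g' (W \ C) → h g = h g')
    (hP : ∀ g, P (eventOn X W g) = f g * h g) : CCI P X A B S := by
  intro x
  have hAW : A ⊆ W := hA.trans (Set.union_subset hCW hSW)
  have hmarg : ∀ T, S ⊆ T → T ⊆ W → P (eventOn X T x) =
      (∑ g ∈ freeConfigs x (C \ T), f g) * ∑ g ∈ freeConfigs x ((W \ C) \ T), h g := by
    intro T hST hTW
    have hsplit : W \ T = C \ T ∪ (W \ C) \ T := by
      ext v
      have := @hCW v
      simp only [Set.mem_sdiff, Set.mem_union]
      tauto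
    rw [measure_eventOn_eq_sum_freeConfigs P hX hTW, hsplit]
    simp_rw [hP]
    refine sum_freeConfigs_union_mul x (Set.disjoint_left.2 fun v h₁ h₂ => h₂.1.2 h₁.1) f h
      (fun g g' hg => hf g g' (hg.mono ?_)) (fun g g' hg => hh g g' (hg.mono ?_))
    · rintro v (hv | hv) ⟨⟨-, hvC⟩, hvT⟩
      exacts [hvC hv, hvT (hST hv)]
    · rintro v ⟨-, hvC⟩ ⟨hv, -⟩
      exact hvC hv
  have hS := hmarg S subset_rfl hSW
  have hAS := hmarg (A ∪ S) Set.subset_union_right (Set.union_subset hAW hSW)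
  have hBS := hmarg (B ∪ S) Set.subset_union_right (Set.union_subset hBW hSW)
  have hABS := hmarg (A ∪ B ∪ S) Set.subset_union_right
    (Set.union_subset (Set.union_subset hAW hBW) hSW)
  -- `B` is invisible inside `C`, and `A` is invisible inside `W \ C` once `S` is removed
  have hBC' : ∀ v ∈ B, v ∉ C := fun _ hv => Set.disjoint_left.1 hBC hv
  have hA' : ∀ v ∈ A, v ∈ C ∨ v ∈ S := fun v hv => hA hv
  have e₁ : C \ (B ∪ S) = C \ S := by
    ext v; have := hBC' v; simp only [Set.mem_sdiff, Set.mem_union]; tauto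
  have e₂ : C \ (A ∪ B ∪ S) = C \ (A ∪ S) := by
    ext v; have := hBC' v; simp only [Set.mem_sdiff, Set.mem_union]; tauto
  have e₃ : (W \ C) \ (A ∪ S) = (W \ C) \ S := by
    ext v; have := hA' v; simp only [Set.mem_sdiff, Set.mem_union]; tauto
  have e₄ : (W \ C) \ (A ∪ B ∪ S) = (W \ C) \ (B ∪ S) := by
    ext v; have := hA' v; simp only [Set.mem_sdiff, Set.mem_union]; tauto
  rw [e₁] at hBS
  rw [e₃] at hAS
  rw [e₂, e₄] at hABS
  rw [hS, hAS, hBS, hABS]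
  ring

end ConditionalIndependence

section Separation

variable {V : Type*} {G : V → V → Prop} {A B S W : Set V}

def reachAvoiding (G : V → V → Prop) (A S : Set V) : Set V :=
  {v | ∃ a ∈ A \ S, ReflTransGen (fun u w => G u w ∧ w ∉ S) a v}

theorem subset_reachAvoiding_union : A ⊆ reachAvoiding G A S ∪ S := fun a ha => by
  by_cases haS : a ∈ S
  exacts [Or.inr haS, Or.inl ⟨a, ⟨ha, haS⟩, .refl⟩]

theorem mem_reachAvoiding_of_adj {v w : V} (hv : v ∈ reachAvoiding G A S) (hvw : G v w)
    (hw : w ∉ S) : w ∈ reachAvoiding G A S :=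
  let ⟨a, ha, hav⟩ := hv
  ⟨a, ha, hav.tail ⟨hvw, hw⟩⟩

theorem reachAvoiding_subset (hA : A ⊆ W) (hG : ∀ u w, G u w → w ∈ W) :
    reachAvoiding G A S ⊆ W := by
  rintro v ⟨a, ⟨ha, -⟩, hav⟩
  rcases hav.cases_tail with rfl | ⟨u, -, huv, -⟩
  exacts [hA ha, hG u v huv]

theorem USep.disjoint_reachAvoiding (hsep : USep G A B S) : Disjoint B (reachAvoiding G A S) := by
  refine Set.disjoint_left.2 fun b hb ⟨a, ⟨ha, haS⟩, hab⟩ => ?_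
  obtain ⟨p, hch, hhd, hlast, hnd⟩ := exists_uPath_of_reflTransGen hab
  have hpS : ∀ v ∈ p, v ∉ S :=
    hch.induction _ _ (fun _ _ h _ => h.2) fun hp => by
      obtain ⟨c, p', rfl⟩ := List.exists_cons_of_ne_nil hp
      simp_all
  obtain ⟨s, hs, hsp⟩ := hsep a ha b hb p ⟨hch.imp fun _ _ h => h.1, hhd, hlast, hnd⟩
  exact hpS s hsp hs

end Separation

section Moralisation

variable {V Ω α : Type*} {E : V → V → Prop} {W : Set V}

theorem isAncestral_ancSet (U : Set V) : IsAncestral E (AncSet E U) :=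
  fun _ ⟨t, ht, hut⟩ _ hwu => ⟨t, ht, hut.head hwu⟩

theorem subset_ancSet (U : Set V) : U ⊆ AncSet E U :=
  fun v hv => ⟨v, hv, .refl⟩

theorem IsAncestral.family_subset (hW : IsAncestral E W) {u : V} (hu : u ∈ W) :
    family E u ⊆ W := by
  rintro w (rfl | hwu)
  exacts [hu, hW u hu w hwu]

theorem mem_of_moral_inducedE {u w : V} (h : Moral (InducedE E W) u w) : w ∈ W := by
  obtain ⟨-, ⟨-, -, hw⟩ | ⟨-, hw, -⟩ | ⟨c, ⟨-, -, -⟩, ⟨-, hw, -⟩⟩⟩ := h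
  exacts [hw, hw, hw]

theorem IsAncestral.moral_inducedE_of_mem_family (hW : IsAncestral E W) {u k₁ k₂ : V}
    (hu : u ∈ W) (h₁ : k₁ ∈ family E u) (h₂ : k₂ ∈ family E u) (hne : k₁ ≠ k₂) :
    Moral (InducedE E W) k₁ k₂ := by
  have hpa : ∀ k, E k u → InducedE E W k u := fun k hk => ⟨hk, hW u hu k hk, hu⟩
  refine ⟨hne, ?_⟩
  rcases h₁ with rfl | h₁ <;> rcases h₂ with rfl | h₂
  exacts [absurd rfl hne, Or.inr (Or.inl (hpa k₂ h₂)), Or.inl (hpa k₁ h₁),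
    Or.inr (Or.inr ⟨u, hpa k₁ h₁, hpa k₂ h₂⟩)]

theorem IsAncestral.family_subset_or_disjoint_reachAvoiding (hW : IsAncestral E W) (A S : Set V)
    {u : V} (hu : u ∈ W) :
    family E u ⊆ reachAvoiding (Moral (InducedE E W)) A S ∪ S ∨
      Disjoint (family E u) (reachAvoiding (Moral (InducedE E W)) A S) := by
  by_cases h : ∃ k ∈ family E u, k ∈ reachAvoiding (Moral (InducedE E W)) A S
  · obtain ⟨k, hk, hkC⟩ := h
    refine Or.inl fun k' hk' => ?_
    by_cases hk'S : k' ∈ S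
    · exact Or.inr hk'S
    by_cases hkk' : k = k'
    · exact Or.inl (hkk' ▸ hkC)
    exact Or.inl
      (mem_reachAvoiding_of_adj hkC (hW.moral_inducedE_of_mem_family hu hk hk' hkk') hk'S)
  · exact Or.inr (Set.disjoint_left.2 fun k hk hkC => h ⟨k, hk, hkC⟩)

variable [MeasurableSpace Ω] [Fintype V] [Fintype α] [MeasurableSpace α]
  [MeasurableSingletonClass α] {P : Measure Ω} {X : V → Ω → α}

theorem cci_of_family_subset_or_disjoint [IsProbabilityMeasure P] (hE : IsAcyclicD E)
    (hX : ∀ v, Measurable (X v)) (hfact : DAGFactorizes P E X) {A B S C : Set V}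
    (hW : IsAncestral E W) (hCW : C ⊆ W) (hSW : S ⊆ W) (hBW : B ⊆ W) (hA : A ⊆ C ∪ S)
    (hBC : Disjoint B C) (hfam : ∀ u ∈ W, family E u ⊆ C ∪ S ∨ Disjoint (family E u) C) :
    CCI P X A B S := by
  classical
  let φ : V → Prop := fun u => family E u ⊆ C ∪ S
  refine cci_of_measure_eventOn_eq_mul hX hCW hSW hBW hA hBC
    (fun g => ∏ u ∈ W.toFinset with φ u, condFactor P E X u g)
    (fun g => ∏ u ∈ W.toFinset with ¬ φ u, condFactor P E X u g) ?_ ?_ ?_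
  · exact fun g g' hg => prod_congr rfl fun u hu => condFactor_congr (hg.mono (mem_filter.1 hu).2)
  · refine fun g g' hg => prod_congr rfl fun u hu => condFactor_congr (hg.mono ?_)
    obtain ⟨huW, hφ⟩ := mem_filter.1 hu
    rw [Set.mem_toFinset] at huW
    exact Set.subset_sdiff.2 ⟨hW.family_subset huW, (hfam u huW).resolve_left hφ⟩
  · intro g
    rw [prod_filter_mul_prod_filter_not, ← measure_eventOn_eq_prod_condFactor hE hX hfact _
      (by rwa [Set.coe_toFinset]) g, Set.coe_toFinset]

end Moralisation

theorem moralisation_implies_conditional_independence_general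
    {V Ω α : Type*} [Fintype V] [Fintype α] [MeasurableSpace Ω]
    [MeasurableSpace α] [MeasurableSingletonClass α]
    (P : Measure Ω) [IsProbabilityMeasure P]
    (E : V → V → Prop) (hE : IsAcyclicD E)
    (X : V → Ω → α) (hX : ∀ v, Measurable (X v))
    (hfact : DAGFactorizes P E X)
    (A B S : Set V)
    (hsep : USep (Moral (InducedE E (AncSet E (A ∪ B ∪ S)))) A B S) :
    CCI P X A B S := by
  have hW := isAncestral_ancSet (E := E) (A ∪ B ∪ S)
  have hABS := subset_ancSet (E := E) (A ∪ B ∪ S)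
  exact cci_of_family_subset_or_disjoint hE hX hfact hW
    (reachAvoiding_subset (fun a ha => hABS (.inl (.inl ha))) fun _ _ => mem_of_moral_inducedE)
    (fun s hs => hABS (.inr hs)) (fun b hb => hABS (.inl (.inr hb))) subset_reachAvoiding_union
    hsep.disjoint_reachAvoiding fun u hu => hW.family_subset_or_disjoint_reachAvoiding A S hu

/-- If a joint distribution of discrete variables factorizes according to a DAG `E`, and
`A`, `B` are separated by `S` in the moral graph of the ancestral subgraph generated by
`A ∪ B ∪ S`, then `A ⊥⊥ B | S` holds in the distribution. -/
theorem moralisation_implies_conditional_independence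
    {V Ω α : Type*} [Fintype V] [DecidableEq V] [Fintype α] [MeasurableSpace Ω]
    [MeasurableSpace α] [MeasurableSingletonClass α]
    (P : Measure Ω) [IsProbabilityMeasure P]
    (E : V → V → Prop) (hE : IsAcyclicD E)
    (X : V → Ω → α) (hX : ∀ v, Measurable (X v))
    (hfact : DAGFactorizes P E X)
    (A B S : Set V)
    (hsep : USep (Moral (InducedE E (AncSet E (A ∪ B ∪ S)))) A B S) :
    CCI P X A B S :=
  moralisation_implies_conditional_independence_general P E hE X hX hfact A B S hsep
end

section
/- For binary potential responses (Y0, Y1) with given marginals p1 = P(Y1 = 1) > 0 and p0 = P(Y0 = 1), the quantity P(Y0 = 0 | Y1 = 1) ranges, over all joint distributions of (Y0, Y1) with these marginals, over exactly the interval [max(0, 1 − p0/p1), min(1, (1 − p0)/p1)]. -/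
open MeasureTheory ProbabilityTheory
open scoped ENNReal

private lemma meas_bb (s : Set (Bool × Bool)) : MeasurableSet s :=
  s.toFinite.measurableSet

/-- Fréchet-style bounds for the probability of causation: over all joint distributions
of binary potential responses `(Y₀, Y₁)` (coded as `Bool × Bool`, with `Y₀` the first
and `Y₁` the second coordinate) with fixed marginals `P(Y₀ = 1) = p₀` and
`P(Y₁ = 1) = p₁ > 0`, the quantity `PC = P(Y₀ = 0 | Y₁ = 1)` ranges over exactly the
interval `[max 0 (1 - p₀/p₁), min 1 ((1 - p₀)/p₁)]`. -/
theorem probability_of_causation_bounds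
    (p0 p1 : ℝ) (hp0 : 0 ≤ p0) (hp0' : p0 ≤ 1) (hp1 : 0 < p1) (hp1' : p1 ≤ 1) :
    {r : ℝ | ∃ μ : Measure (Bool × Bool), IsProbabilityMeasure μ ∧
        μ {p | p.1 = true} = ENNReal.ofReal p0 ∧
        μ {p | p.2 = true} = ENNReal.ofReal p1 ∧
        r = ((μ[|{p | p.2 = true}]) {p | p.1 = false}).toReal} =
      Set.Icc (max 0 (1 - p0 / p1)) (min 1 ((1 - p0) / p1)) := by
  ext r
  simp only [Set.mem_setOf_eq, Set.mem_Icc]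
  constructor
  · rintro ⟨μ, hprob, h0, h1, hr⟩
    set B : Set (Bool × Bool) := {p | p.2 = true} with hB
    set A : Set (Bool × Bool) := {p | p.1 = false} with hA
    have hμB : μ B = ENNReal.ofReal p1 := h1
    have hfin : μ (B ∩ A) ≤ 1 := prob_le_one
    have hne : μ (B ∩ A) ≠ ⊤ := (hfin.trans_lt ENNReal.one_lt_top).ne
    set m : ℝ := (μ (B ∩ A)).toReal with hm
    have hm0 : 0 ≤ m := ENNReal.toReal_nonneg
    -- m ≤ p1
    have hmp1 : m ≤ p1 := by
      have := measure_mono (μ := μ) (Set.inter_subset_left (s := B) (t := A))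
      rw [hμB] at this
      calc m ≤ (ENNReal.ofReal p1).toReal := ENNReal.toReal_mono ENNReal.ofReal_ne_top this
        _ = p1 := ENNReal.toReal_ofReal hp1.le
    -- m ≤ 1 - p0
    have hAc : Aᶜ = {p : Bool × Bool | p.1 = true} := by
      ext p; simp [hA]
    have hμA : μ A = 1 - ENNReal.ofReal p0 := by
      have := measure_compl (μ := μ) (meas_bb Aᶜ) (measure_ne_top μ _)
      rw [compl_compl, hAc, h0] at this
      simpa [measure_univ] using this
    have hm1p0 : m ≤ 1 - p0 := by
      have hsub := measure_mono (μ := μ) (Set.inter_subset_right (s := B) (t := A))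
      rw [hμA] at hsub
      have : m ≤ (1 - ENNReal.ofReal p0 : ℝ≥0∞).toReal :=
        ENNReal.toReal_mono (by finiteness) hsub
      calc m ≤ (1 - ENNReal.ofReal p0 : ℝ≥0∞).toReal := this
        _ ≤ 1 - p0 := by
          rw [ENNReal.toReal_sub_of_le (by simpa using hp0') (by simp)]
          simp [ENNReal.toReal_ofReal hp0]
    -- p1 - p0 ≤ m
    have hlow : p1 - p0 ≤ m := by
      have hsub : B ⊆ (B ∩ A) ∪ Aᶜ := by
        intro p hp
        by_cases h : p ∈ A
        · exact Or.inl ⟨hp, h⟩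
        · exact Or.inr h
      have := (measure_mono (μ := μ) hsub).trans (measure_union_le _ _)
      rw [hμB, hAc, h0] at this
      have htr : p1 ≤ m + p0 := by
        have hfin2 : μ (B ∩ A) + ENNReal.ofReal p0 ≠ ⊤ := by finiteness
        have := ENNReal.toReal_mono hfin2 this
        rwa [ENNReal.toReal_ofReal hp1.le, ENNReal.toReal_add hne ENNReal.ofReal_ne_top,
          ENNReal.toReal_ofReal hp0] at this
      linarith
    -- r = m / p1
    have hrval : r = m / p1 := by
      rw [hr, cond_apply (meas_bb B) μ A, ENNReal.toReal_mul, ENNReal.toReal_inv, hμB,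
        ENNReal.toReal_ofReal hp1.le, ← hm, inv_mul_eq_div]
    subst hrval
    constructor
    · refine max_le (div_nonneg hm0 hp1.le) ?_
      have h := (div_le_div_iff_of_pos_right hp1).mpr hlow
      rw [sub_div, div_self hp1.ne'] at h
      exact h
    · exact le_min ((div_le_one hp1).mpr hmp1) ((div_le_div_iff_of_pos_right hp1).mpr hm1p0)
  · rintro ⟨hlo, hhi⟩
    have hr0 : 0 ≤ r := le_trans (le_max_left _ _) hlo
    have hr1 : r ≤ 1 := le_trans hhi (min_le_left _ _)
    have hlo' : 1 - p0 / p1 ≤ r := le_trans (le_max_right _ _) hlo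
    have hhi' : r ≤ (1 - p0) / p1 := le_trans hhi (min_le_right _ _)
    set a : ℝ := (1 - r) * p1 with ha
    have ha0 : 0 ≤ a := mul_nonneg (by linarith) hp1.le
    have hap0 : a ≤ p0 := by
      have : (1 - p0 / p1) * p1 ≤ r * p1 := by nlinarith
      have h2 : p1 - p0 ≤ r * p1 := by
        field_simp at this; nlinarith [this]
      nlinarith
    have hap1 : a ≤ p1 := by nlinarith
    have hsum : 0 ≤ 1 - p0 - p1 + a := by
      have : r * p1 ≤ 1 - p0 := by
        have := mul_le_mul_of_nonneg_right hhi' hp1.le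
        rwa [div_mul_cancel₀ _ hp1.ne'] at this
      nlinarith
    refine ⟨(ENNReal.ofReal a) • Measure.dirac (true, true) +
        (ENNReal.ofReal (p0 - a)) • Measure.dirac (true, false) +
        (ENNReal.ofReal (p1 - a)) • Measure.dirac (false, true) +
        (ENNReal.ofReal (1 - p0 - p1 + a)) • Measure.dirac (false, false), ?_, ?_, ?_, ?_⟩
    · constructor
      simp only [Measure.coe_add, Pi.add_apply, Measure.smul_apply, smul_eq_mul,
        Measure.dirac_apply' _ MeasurableSet.univ, Set.indicator_univ, Pi.one_apply, mul_one]
      rw [← ENNReal.ofReal_add ha0 (by linarith), ← ENNReal.ofReal_add (by linarith) (by linarith),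
        ← ENNReal.ofReal_add (by linarith) hsum]
      norm_num
      ring_nf
    · rw [show ({p | p.1 = true} : Set (Bool × Bool)) = {(true, true), (true, false)} by
        ext ⟨x, y⟩; cases x <;> cases y <;> simp]
      simp only [Measure.coe_add, Pi.add_apply, Measure.smul_apply, smul_eq_mul,
        Measure.dirac_apply' _ (meas_bb _), Set.indicator_apply]
      norm_num
      rw [← ENNReal.ofReal_add ha0 (by linarith)]
      norm_num
    · rw [show ({p | p.2 = true} : Set (Bool × Bool)) = {(true, true), (false, true)} by
        ext ⟨x, y⟩; cases x <;> cases y <;> simp]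
      simp only [Measure.coe_add, Pi.add_apply, Measure.smul_apply, smul_eq_mul,
        Measure.dirac_apply' _ (meas_bb _), Set.indicator_apply]
      norm_num
      rw [← ENNReal.ofReal_add ha0 (by linarith)]
      norm_num
    · rw [cond_apply (meas_bb _) _ _]
      have hint : ({p | p.2 = true} ∩ {p | p.1 = false} : Set (Bool × Bool)) =
          {(false, true)} := by
        ext ⟨x, y⟩; cases x <;> cases y <;> simp
      have hBval : ((ENNReal.ofReal a) • Measure.dirac ((true, true) : Bool × Bool) +
          (ENNReal.ofReal (p0 - a)) • Measure.dirac (true, false) +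
          (ENNReal.ofReal (p1 - a)) • Measure.dirac (false, true) +
          (ENNReal.ofReal (1 - p0 - p1 + a)) • Measure.dirac (false, false))
          {p | p.2 = true} = ENNReal.ofReal p1 := by
        rw [show ({p | p.2 = true} : Set (Bool × Bool)) = {(true, true), (false, true)} by
          ext ⟨x, y⟩; cases x <;> cases y <;> simp]
        simp only [Measure.coe_add, Pi.add_apply, Measure.smul_apply, smul_eq_mul,
          Measure.dirac_apply' _ (meas_bb _), Set.indicator_apply]
        norm_num
        rw [← ENNReal.ofReal_add ha0 (by linarith)]
        norm_num
      rw [hint, hBval]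
      have hsing : ((ENNReal.ofReal a) • Measure.dirac ((true, true) : Bool × Bool) +
          (ENNReal.ofReal (p0 - a)) • Measure.dirac (true, false) +
          (ENNReal.ofReal (p1 - a)) • Measure.dirac (false, true) +
          (ENNReal.ofReal (1 - p0 - p1 + a)) • Measure.dirac (false, false))
          {((false : Bool), (true : Bool))} = ENNReal.ofReal (p1 - a) := by
        simp only [Measure.coe_add, Pi.add_apply, Measure.smul_apply, smul_eq_mul,
          Measure.dirac_apply' _ (meas_bb _), Set.indicator_apply]
        norm_num
      rw [hsing, ENNReal.toReal_mul, ENNReal.toReal_inv, ENNReal.toReal_ofReal hp1.le,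
        ENNReal.toReal_ofReal (by linarith)]
      field_simp [ha]
      ring
end
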